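/- arXiv:2512.19067 — 8 statements merged into one kernel-verified Lean document; each statement's English description precedes it below -/
import Mathlib

section
/- If C follows an Erlang distribution with shape k ≥ 2 (integer) and rate λ > 0, then for every T > 0, E[C − T | C > T] < E[C] = k/λ. Explicitly, E[C − T | C > T] = k/λ − (Σ_{n=0}^{k−2} (λT)^{n+1}/n!) / (λ Σ_{n=0}^{k−1} (λT)^n/n!). -/
open MeasureTheory ProbabilityTheory Real Set Filter
open scoped NNReal ENNReal

lemma tend0 (n : ℕ) {b : ℝ} (hb : 0 < b) :
    Tendsto (fun x : ℝ => x ^ n * Real.exp (-(b * x))) atTop (nhds 0) := by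
  have := tendsto_rpow_mul_exp_neg_mul_atTop_nhds_zero (n : ℝ) b hb
  simpa [Real.rpow_natCast, neg_mul] using this

lemma integ {b : ℝ} (hb : 0 < b) (n : ℕ) (T : ℝ) :
    IntegrableOn (fun t : ℝ => t ^ n * Real.exp (-(b * t))) (Set.Ioi T) := by
  apply integrable_of_isBigO_exp_neg (half_pos hb)
  · exact (Continuous.continuousOn (by continuity))
  · have h : ∀ x : ℝ, x ^ n * Real.exp (-(b * x)) / Real.exp (-(b/2) * x)
        = x ^ n * Real.exp (-((b/2) * x)) := by
      intro x
      rw [mul_div_assoc, ← Real.exp_sub]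
      ring_nf
    apply Asymptotics.IsLittleO.isBigO
    rw [Asymptotics.isLittleO_iff_tendsto (fun x hx => absurd hx (Real.exp_pos _).ne')]
    have := tend0 n (half_pos hb)
    apply this.congr' (Eventually.of_forall fun x => (h x).symm)

lemma GInt {b : ℝ} (hb : 0 < b) (T : ℝ) : ∀ n : ℕ,
    (∫ t in Set.Ioi T, t ^ n * Real.exp (-(b * t)))
      = (n.factorial / b ^ (n + 1)) * Real.exp (-(b * T)) *
          ∑ m ∈ Finset.range (n + 1), (b * T) ^ m / m.factorial := by
  intro n
  induction n with
  | zero =>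
    have hF : ∀ x ∈ Set.Ici T, HasDerivAt (fun t : ℝ => -Real.exp (-(b * t)) / b)
        ((fun t : ℝ => t ^ 0 * Real.exp (-(b * t))) x) x := by
      intro x _
      have h1 : HasDerivAt (fun t : ℝ => -(b * t)) (-b) x := by
        simpa [Pi.neg_def] using ((hasDerivAt_id x).const_mul b).neg
      have := (h1.exp.neg).div_const b
      refine this.congr_deriv ?_
      field_simp
    have htend : Tendsto (fun t : ℝ => -Real.exp (-(b * t)) / b) atTop (nhds 0) := by
      have : Tendsto (fun t : ℝ => Real.exp (-(b * t))) atTop (nhds 0) := by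
        simpa using tend0 0 hb
      simpa using (this.neg).div_const b
    rw [integral_Ioi_of_hasDerivAt_of_tendsto' hF ((integ hb 0 T)) htend]
    simp [Nat.factorial]
    field_simp
  | succ n ih =>
    set F : ℝ → ℝ := fun t => -(t ^ (n+1) * Real.exp (-(b * t))) / b with hFdef
    have hF : ∀ x ∈ Set.Ici T, HasDerivAt F
        (x ^ (n+1) * Real.exp (-(b * x)) - ((n+1 : ℝ)/b) * (x ^ n * Real.exp (-(b * x)))) x := by
      intro x _
      have h1 : HasDerivAt (fun t : ℝ => -(b * t)) (-b) x := by
        simpa [Pi.neg_def] using ((hasDerivAt_id x).const_mul b).neg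
      have h2 := ((hasDerivAt_pow (n+1) x).mul h1.exp).neg.div_const b
      refine h2.congr_deriv ?_
      rw [Nat.add_sub_cancel]; push_cast
      field_simp
      ring
    have htend : Tendsto F atTop (nhds 0) := by
      have := ((tend0 (n+1) hb).neg).div_const b
      simpa using this
    have hint : IntegrableOn (fun x : ℝ =>
        x ^ (n+1) * Real.exp (-(b * x)) - ((n+1 : ℝ)/b) * (x ^ n * Real.exp (-(b * x))))
        (Set.Ioi T) := (integ hb (n+1) T).sub ((integ hb n T).const_mul _)
    have key := integral_Ioi_of_hasDerivAt_of_tendsto' hF hint htend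
    rw [integral_sub (integ hb (n+1) T) ((integ hb n T).const_mul _),
      integral_const_mul] at key
    have hG : (∫ t in Set.Ioi T, t ^ (n+1) * Real.exp (-(b * t)))
        = T ^ (n+1) * Real.exp (-(b * T)) / b
          + ((n+1 : ℝ)/b) * ∫ t in Set.Ioi T, t ^ n * Real.exp (-(b * t)) := by
      have h2 := eq_add_of_sub_eq key
      rw [hFdef] at h2
      rw [h2]; ring
    rw [hG, Finset.sum_range_succ, ih]
    have hbne : b ≠ 0 := hb.ne'
    have hfac : ((n+1).factorial : ℝ) = (n+1) * n.factorial := by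
      push_cast [Nat.factorial_succ]; ring
    have hfne : (n.factorial : ℝ) ≠ 0 := Nat.cast_ne_zero.mpr n.factorial_ne_zero
    rw [hfac]
    field_simp
    ring

/-- If `C ~ Erlang(k, lam)` with integer `k ≥ 2` and rate `lam > 0`
(density `lam^k t^(k−1) e^(−lam t)/(k−1)!` on `(0,∞)`), then for every `T > 0`,
`E[C − T | C > T] = k/lam − (Σ_{n=0}^{k−2} (lam T)^(n+1)/n!) / (lam Σ_{n=0}^{k−1} (lam T)^n/n!)`,
and in particular `E[C − T | C > T] < E[C] = k/lam`. -/
theorem erlang_cond_tail_mean {Ω : Type*} [MeasurableSpace Ω] (μ : Measure Ω)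
    [IsProbabilityMeasure μ] (C : Ω → ℝ) (hmeas : Measurable C)
    (k : ℕ) (hk : 2 ≤ k) (lam : ℝ) (hlam : 0 < lam)
    (hlaw : μ.map C = (volume : Measure ℝ).withDensity (fun t =>
      ENNReal.ofReal (if 0 < t then
        lam ^ k * t ^ (k - 1) * Real.exp (-(lam * t)) / (Nat.factorial (k - 1)) else 0)))
    (hint : Integrable C μ) (T : ℝ) (hT : 0 < T) :
    (∫ ω in {ω | T < C ω}, (C ω - T) ∂μ) / (μ {ω | T < C ω}).toReal
      = k / lam -
        (∑ n ∈ Finset.range (k - 1), (lam * T) ^ (n + 1) / (Nat.factorial n)) /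
          (lam * ∑ n ∈ Finset.range k, (lam * T) ^ n / (Nat.factorial n)) ∧
    (∫ ω in {ω | T < C ω}, (C ω - T) ∂μ) / (μ {ω | T < C ω}).toReal < k / lam := by
  have hk1 : k - 1 + 1 = k := by omega
  have hkpos : 0 < k := by omega
  set x : ℝ := lam * T with hxdef
  have hxpos : 0 < x := mul_pos hlam hT
  set e : ℝ := Real.exp (-(lam * T)) with hedef
  have hepos : 0 < e := Real.exp_pos _
  set D : ℝ := ∑ n ∈ Finset.range k, x ^ n / (Nat.factorial n) with hDdef
  set S : ℝ := ∑ n ∈ Finset.range (k - 1), x ^ (n + 1) / (Nat.factorial n) with hSdef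
  have hDpos : 0 < D := by
    apply Finset.sum_pos
    · intro m _
      positivity
    · exact ⟨0, Finset.mem_range.2 hkpos⟩
  have hSpos : 0 < S := by
    apply Finset.sum_pos
    · intro m _
      positivity
    · exact ⟨0, Finset.mem_range.2 (by omega)⟩
  have hfkne : ((k - 1).factorial : ℝ) ≠ 0 := Nat.cast_ne_zero.mpr (k - 1).factorial_ne_zero
  have hlamne : lam ≠ 0 := hlam.ne'
  set f : ℝ → ℝ := fun t => if 0 < t then
      lam ^ k * t ^ (k - 1) * Real.exp (-(lam * t)) / (Nat.factorial (k - 1)) else 0 with hfdef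
  have hfmeas : Measurable f := by
    apply Measurable.ite
    · exact measurableSet_lt measurable_const measurable_id
    · exact (Continuous.measurable (by continuity))
    · exact measurable_const
  have hfnonneg : ∀ t, 0 ≤ f t := by
    intro t
    rw [hfdef]
    dsimp only
    split
    · positivity
    · exact le_refl 0
  -- the set
  have hPre : {ω | T < C ω} = C ⁻¹' (Set.Ioi T) := rfl
  -- value of f on Ioi T
  have hfeq : ∀ t ∈ Set.Ioi T, f t
      = (lam ^ k / (Nat.factorial (k - 1))) * (t ^ (k - 1) * Real.exp (-(lam * t))) := by
    intro t ht
    rw [hfdef]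
    dsimp only
    rw [if_pos (hT.trans ht)]
    ring
  -- probability
  have hP : μ {ω | T < C ω} = ENNReal.ofReal (e * D) := by
    rw [hPre, ← Measure.map_apply hmeas measurableSet_Ioi, hlaw,
      withDensity_apply _ measurableSet_Ioi]
    have h1 : ∫⁻ t in Set.Ioi T, ENNReal.ofReal (f t)
        = ∫⁻ t in Set.Ioi T, ENNReal.ofReal
            ((lam ^ k / (Nat.factorial (k - 1))) * (t ^ (k - 1) * Real.exp (-(lam * t)))) := by
      apply setLIntegral_congr_fun measurableSet_Ioi
      exact fun t ht => by rw [hfeq t ht]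
    rw [show (fun t : ℝ => ENNReal.ofReal (if 0 < t then
        lam ^ k * t ^ (k - 1) * Real.exp (-(lam * t)) / (Nat.factorial (k - 1)) else 0))
        = fun t => ENNReal.ofReal (f t) from rfl, h1,
      ← ofReal_integral_eq_lintegral_ofReal
        (((integ hlam (k-1) T).const_mul _))
        ((ae_restrict_iff' measurableSet_Ioi).2 (Eventually.of_forall fun t ht => by
          have h0t : (0:ℝ) < t := hT.trans ht
          positivity))]
    rw [MeasureTheory.integral_const_mul, GInt hlam T (k-1), hk1]
    congr 1
    rw [hedef, hDdef, hxdef]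
    field_simp
  have hPtoReal : (μ {ω | T < C ω}).toReal = e * D := by
    rw [hP, ENNReal.toReal_ofReal (mul_pos hepos hDpos).le]
  -- auxiliary sum identities
  have hxk : x * D - S = x ^ k / ((k - 1).factorial : ℝ) := by
    have h1 : x * D = ∑ m ∈ Finset.range k, x ^ (m + 1) / (Nat.factorial m) := by
      rw [hDdef, Finset.mul_sum]
      exact Finset.sum_congr rfl fun m _ => by rw [pow_succ]; ring
    rw [h1, ← hk1, Finset.sum_range_succ, hSdef, hk1]
    ring
  have hfactk : (k.factorial : ℝ) = k * ((k - 1).factorial : ℝ) := by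
    rw [← Nat.mul_factorial_pred hkpos.ne']
    push_cast
    ring
  -- numerator
  have hN : (∫ ω in {ω | T < C ω}, (C ω - T) ∂μ) = (e / lam) * (k * D - S) := by
    have hstep : ∫ ω in C ⁻¹' Set.Ioi T, (C ω - T) ∂μ
        = ∫ t in Set.Ioi T, (t - T) ∂(μ.map C) :=
      (setIntegral_map (f := fun t : ℝ => t - T) measurableSet_Ioi
        (continuous_id.sub continuous_const).aestronglyMeasurable hmeas.aemeasurable).symm
    rw [hPre, hstep, hlaw]
    rw [show (fun t : ℝ => ENNReal.ofReal (if 0 < t then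
        lam ^ k * t ^ (k - 1) * Real.exp (-(lam * t)) / (Nat.factorial (k - 1)) else 0))
        = fun t => ((Real.toNNReal (f t) : ℝ≥0) : ℝ≥0∞) from rfl]
    rw [setIntegral_withDensity_eq_setIntegral_smul hfmeas.real_toNNReal _ measurableSet_Ioi]
    have h2 : ∫ t in Set.Ioi T, (Real.toNNReal (f t)) • (t - T)
        = ∫ t in Set.Ioi T, ((lam ^ k / (Nat.factorial (k - 1))) * (t ^ k * Real.exp (-(lam * t)))
            - ((lam ^ k / (Nat.factorial (k - 1))) * T) * (t ^ (k-1) * Real.exp (-(lam * t)))) := by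
      apply setIntegral_congr_fun measurableSet_Ioi
      intro t ht
      dsimp only
      have htk : t ^ k = t ^ (k - 1) * t := by conv_lhs => rw [← hk1, pow_succ]
      rw [NNReal.smul_def, Real.coe_toNNReal _ (hfnonneg t), hfeq t ht, smul_eq_mul, htk]
      ring
    rw [h2, integral_sub ((integ hlam k T).const_mul _) ((integ hlam (k-1) T).const_mul _),
      MeasureTheory.integral_const_mul, MeasureTheory.integral_const_mul,
      GInt hlam T k, GInt hlam T (k-1), hk1]
    rw [← hedef, ← hxdef, ← hDdef, Finset.sum_range_succ, ← hDdef]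
    have hxk' : x ^ k = (x * D - S) * ((k - 1).factorial : ℝ) := by
      rw [hxk]; field_simp
    rw [hfactk, hxk']
    field_simp
    ring
  have h1 : (e / lam) * (k * D - S) / (e * D) = k / lam - S / (lam * D) := by
    field_simp
  refine ⟨by rw [hN, hPtoReal, h1], ?_⟩
  rw [hN, hPtoReal, h1]
  exact sub_lt_self _ (div_pos hSpos (mul_pos hlam hDpos))
end

section
/- If C ~ Erlang(k, λ) with integer k ≥ 2 and λ > 0, then for every T > 0 with F_C(T) > 0, the effective cost κ(T) = E[min{C,T}]/F_C(T) satisfies κ(T) > E[C]; i.e., any finite per-action deadline strictly increases the effective cost. -/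
open MeasureTheory ProbabilityTheory Real
open scoped ENNReal NNReal

lemma exp_deriv_aux (lam : ℝ) (hlam : lam ≠ 0) (x : ℝ) :
    HasDerivAt (fun t : ℝ => -Real.exp (-(lam * t)) / lam) (Real.exp (-(lam * x))) x := by
  have h1 : HasDerivAt (fun t : ℝ => -(lam * t)) (-lam) x := by
    exact (((hasDerivAt_id x).const_mul lam).neg).congr_deriv (by simp)
  have h2 := (Real.hasDerivAt_exp (-(lam * x))).comp x h1
  have h3 := (h2.neg).div_const lam
  exact h3.congr_deriv (by field_simp)

lemma erlang_aux_integral (lam : ℝ) (hlam : 0 < lam) (T : ℝ) (n : ℕ) :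
    ∫ t in (0:ℝ)..T, t ^ n * Real.exp (-(lam * t)) =
      (n.factorial : ℝ) / lam ^ (n + 1) *
        (1 - Real.exp (-(lam * T)) * ∑ j ∈ Finset.range (n + 1), (lam * T) ^ j / j.factorial) := by
  have hl : lam ≠ 0 := ne_of_gt hlam
  induction n with
  | zero =>
    have := intervalIntegral.integral_eq_sub_of_hasDerivAt
      (f := fun t : ℝ => -Real.exp (-(lam * t)) / lam)
      (f' := fun t : ℝ => Real.exp (-(lam * t))) (a := 0) (b := T)
      (fun x _ => exp_deriv_aux lam hl x)
      (Continuous.intervalIntegrable (by continuity) 0 T)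
    simp only [pow_zero, one_mul]
    rw [this]
    simp [Finset.sum_range_one]
    field_simp
    ring
  | succ n ih =>
    have hparts := intervalIntegral.integral_mul_deriv_eq_deriv_mul
      (u := fun t : ℝ => t ^ (n + 1)) (u' := fun t : ℝ => ((n : ℝ) + 1) * t ^ n)
      (v := fun t : ℝ => -Real.exp (-(lam * t)) / lam)
      (v' := fun t : ℝ => Real.exp (-(lam * t)))
      (fun x _ => by simpa using hasDerivAt_pow (n + 1) x)
      (fun x _ => exp_deriv_aux lam hl x)
      (Continuous.intervalIntegrable (by continuity) 0 T)
      (Continuous.intervalIntegrable (by continuity) 0 T)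
    have hconst : ∫ t in (0:ℝ)..T, ((n : ℝ) + 1) * t ^ n * (-Real.exp (-(lam * t)) / lam)
        = (-((n : ℝ) + 1) / lam) * ∫ t in (0:ℝ)..T, t ^ n * Real.exp (-(lam * t)) := by
      rw [← intervalIntegral.integral_const_mul]
      apply intervalIntegral.integral_congr
      intro x _
      ring
    rw [hparts, hconst, ih, Finset.sum_range_succ (n := n + 1)]
    have hfac : ((n + 1).factorial : ℝ) = ((n : ℝ) + 1) * (n.factorial : ℝ) := by
      rw [Nat.factorial_succ]; push_cast; ring
    have hfn : (n.factorial : ℝ) ≠ 0 := Nat.cast_ne_zero.mpr (Nat.factorial_ne_zero n)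
    have hfn1 : ((n + 1).factorial : ℝ) ≠ 0 := Nat.cast_ne_zero.mpr (Nat.factorial_ne_zero _)
    rw [hfac]
    field_simp
    ring

/-- If `C ~ Erlang(k, lam)` with integer `k ≥ 2` and `lam > 0`, then for
every `T > 0` with `F_C(T) > 0`, the effective cost `κ(T) = E[min{C,T}]/F_C(T)`
satisfies `κ(T) > E[C] = k/lam`. -/
theorem erlang_kappa_gt_mean {Ω : Type*} [MeasurableSpace Ω] (μ : Measure Ω)
    [IsProbabilityMeasure μ] (C : Ω → ℝ) (hmeas : Measurable C)
    (k : ℕ) (hk : 2 ≤ k) (lam : ℝ) (hlam : 0 < lam)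
    (hlaw : μ.map C = (volume : Measure ℝ).withDensity (fun t =>
      ENNReal.ofReal (if 0 < t then
        lam ^ k * t ^ (k - 1) * Real.exp (-(lam * t)) / (Nat.factorial (k - 1)) else 0)))
    (hint : Integrable C μ) (T : ℝ) (hT : 0 < T)
    (hF : 0 < (μ {ω | C ω ≤ T}).toReal) :
    (∫ ω, min (C ω) T ∂μ) / (μ {ω | C ω ≤ T}).toReal > k / lam := by
  have hl : lam ≠ 0 := ne_of_gt hlam
  have hk1 : 1 ≤ k := by omega
  have hkk : k - 1 + 1 = k := by omega
  set f : ℝ → ℝ := fun t => if 0 < t then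
      lam ^ k * t ^ (k - 1) * Real.exp (-(lam * t)) / (Nat.factorial (k - 1)) else 0 with hfdef
  have hf0 : ∀ t, 0 ≤ f t := by
    intro t
    simp only [hfdef]
    split
    · positivity
    · exact le_rfl
  have hfm : Measurable f := by
    apply Measurable.ite measurableSet_Ioi
    · exact (by continuity : Continuous fun t : ℝ =>
        lam ^ k * t ^ (k - 1) * Real.exp (-(lam * t)) / (Nat.factorial (k - 1))).measurable
    · exact measurable_const
  have hfz : ∀ t ≤ (0:ℝ), f t = 0 := by
    intro t ht; simp [hfdef, not_lt.mpr ht]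
  -- total lintegral is 1
  have hlint : ∫⁻ t, ENNReal.ofReal (f t) = 1 := by
    have h1 : (μ.map C) Set.univ = 1 := by
      rw [Measure.map_apply hmeas MeasurableSet.univ]; simp
    rw [hlaw] at h1
    rwa [withDensity_apply _ MeasurableSet.univ, Measure.restrict_univ] at h1
  have hfi : Integrable f := by
    refine ⟨hfm.aestronglyMeasurable, ?_⟩
    rw [hasFiniteIntegral_iff_ofReal (Filter.Eventually.of_forall hf0), hlint]
    exact ENNReal.one_lt_top
  have hItot : ∫ t, f t = 1 := by
    rw [integral_eq_lintegral_of_nonneg_ae (Filter.Eventually.of_forall hf0)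
      hfm.aestronglyMeasurable, hlint]
    simp
  -- integrability of f * min
  have hgm : Measurable (fun t : ℝ => f t * min t T) :=
    hfm.mul ((continuous_id.min continuous_const).measurable)
  have hgi : Integrable (fun t : ℝ => f t * min t T) := by
    refine Integrable.mono (hfi.const_mul T) hgm.aestronglyMeasurable
      (Filter.Eventually.of_forall fun t => ?_)
    simp only [Real.norm_eq_abs, abs_mul]
    by_cases h0 : 0 < t
    · have h1 : 0 < min t T := lt_min h0 hT
      rw [abs_of_pos h1, abs_of_pos hT]
      calc |f t| * min t T ≤ |f t| * T := by
            exact mul_le_mul_of_nonneg_left (min_le_right t T) (abs_nonneg _)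
        _ = T * |f t| := mul_comm _ _
    · rw [hfz t (not_lt.mp h0)]
      simp
  -- splitting lemma
  have split_Iic : ∀ h : ℝ → ℝ, Integrable h → (∀ t ≤ (0:ℝ), h t = 0) →
      ∫ t in Set.Iic T, h t = ∫ t in Set.Ioc 0 T, h t := by
    intro h hi hz
    rw [← Set.Iic_union_Ioc_eq_Iic hT.le,
      setIntegral_union (Set.Iic_disjoint_Ioc le_rfl) measurableSet_Ioc
        hi.integrableOn hi.integrableOn]
    have hz0 : ∫ x in Set.Iic (0:ℝ), h x = 0 :=
      setIntegral_eq_zero_of_forall_eq_zero (fun x hx => hz x hx)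
    rw [hz0, zero_add]
  -- evaluate F
  have hmap : μ {ω | C ω ≤ T} = (μ.map C) (Set.Iic T) := by
    rw [Measure.map_apply hmeas measurableSet_Iic]; rfl
  have hF1 : (μ {ω | C ω ≤ T}).toReal = ∫ t in Set.Iic T, f t := by
    rw [hmap, hlaw, withDensity_apply _ measurableSet_Iic,
      integral_eq_lintegral_of_nonneg_ae (Filter.Eventually.of_forall hf0)
        hfm.aestronglyMeasurable]
  have hA1 := erlang_aux_integral lam hlam T (k - 1)
  rw [hkk] at hA1
  have hA2 := erlang_aux_integral lam hlam T k
  set E := Real.exp (-(lam * T)) with hEdef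
  set S : ℝ := ∑ j ∈ Finset.range k, (lam * T) ^ j / (j.factorial : ℝ) with hSdef
  set S2 : ℝ := ∑ j ∈ Finset.range (k + 1), (lam * T) ^ j / (j.factorial : ℝ) with hS2def
  have hfacpos : (0:ℝ) < ((k-1).factorial : ℝ) := by positivity
  have hFval : (μ {ω | C ω ≤ T}).toReal = 1 - E * S := by
    rw [hF1, split_Iic f hfi hfz]
    have : ∫ t in Set.Ioc 0 T, f t
        = lam ^ k / ((k-1).factorial : ℝ) * ∫ t in (0:ℝ)..T, t ^ (k-1) * Real.exp (-(lam * t)) := by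
      rw [intervalIntegral.integral_of_le hT.le, ← integral_const_mul]
      apply setIntegral_congr_fun measurableSet_Ioc
      intro t ht
      simp only [hfdef, if_pos ht.1]
      ring
    rw [this, hA1]
    field_simp
  -- evaluate the min-integral
  have hM1 : ∫ ω, min (C ω) T ∂μ = ∫ t, f t * min t T := by
    have h1 : ∫ ω, min (C ω) T ∂μ = ∫ t, min t T ∂(μ.map C) :=
      (integral_map hmeas.aemeasurable
        ((continuous_id.min continuous_const).aestronglyMeasurable)).symm
    rw [h1, hlaw]
    have h2 : (fun t : ℝ => ENNReal.ofReal (f t))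
        = fun t : ℝ => ((f t).toNNReal : ℝ≥0∞) := rfl
    rw [h2, integral_withDensity_eq_integral_smul (hfm.real_toNNReal)]
    congr 1
    funext t
    simp [NNReal.smul_def, Real.coe_toNNReal _ (hf0 t)]
  have hsplit : ∫ t, f t * min t T
      = (∫ t in Set.Iic T, f t * min t T) + ∫ t in Set.Ioi T, f t * min t T :=
    (intervalIntegral.integral_Iic_add_Ioi hgi.integrableOn hgi.integrableOn).symm
  have hMlow : ∫ t in Set.Iic T, f t * min t T = (k : ℝ) / lam * (1 - E * S2) := by
    rw [split_Iic _ hgi (fun t ht => by rw [hfz t ht, zero_mul])]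
    have : ∫ t in Set.Ioc 0 T, f t * min t T
        = lam ^ k / ((k-1).factorial : ℝ) * ∫ t in (0:ℝ)..T, t ^ k * Real.exp (-(lam * t)) := by
      rw [intervalIntegral.integral_of_le hT.le, ← integral_const_mul]
      apply setIntegral_congr_fun measurableSet_Ioc
      intro t ht
      simp only [hfdef, if_pos ht.1, min_eq_left ht.2]
      rw [show t ^ k = t ^ (k-1) * t from by rw [← pow_succ, hkk]]
      ring
    rw [this, hA2]
    have hfack : (k.factorial : ℝ) = (k : ℝ) * ((k-1).factorial : ℝ) := by
      conv_lhs => rw [← hkk]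
      rw [Nat.factorial_succ]
      push_cast [hkk]
      ring
    rw [hfack]
    field_simp
    ring
  have hMhigh : ∫ t in Set.Ioi T, f t * min t T = T * (E * S) := by
    have h1 : ∫ t in Set.Ioi T, f t * min t T = T * ∫ t in Set.Ioi T, f t := by
      rw [← integral_const_mul]
      apply setIntegral_congr_fun measurableSet_Ioi
      intro t ht
      show f t * min t T = T * f t
      rw [min_eq_right (le_of_lt ht)]
      ring
    have h2 : (∫ t in Set.Iic T, f t) + ∫ t in Set.Ioi T, f t = 1 :=
      (intervalIntegral.integral_Iic_add_Ioi hfi.integrableOn hfi.integrableOn).trans hItot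
    have h3 : ∫ t in Set.Iic T, f t = 1 - E * S := by rw [← hF1]; exact hFval
    rw [h1]
    have : ∫ t in Set.Ioi T, f t = E * S := by linarith [h2, h3]
    rw [this]
  -- key strict inequality
  have hx : 0 < lam * T := mul_pos hlam hT
  have hkey : (lam * T) ^ (k - 1) / ((k-1).factorial : ℝ) < S := by
    have hsum := Finset.sum_range_succ (fun j => (lam * T) ^ j / (j.factorial : ℝ)) (k - 1)
    rw [hkk] at hsum
    rw [hSdef, hsum]
    have hpos : 0 < ∑ j ∈ Finset.range (k - 1), (lam * T) ^ j / (j.factorial : ℝ) := by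
      apply Finset.sum_pos
      · intro j _
        positivity
      · exact Finset.nonempty_range_iff.mpr (by omega)
    linarith
  have hS2eq : S2 = S + (lam * T) ^ k / (k.factorial : ℝ) := by
    rw [hS2def, hSdef, Finset.sum_range_succ]
  have hid : (k : ℝ) / lam * ((lam * T) ^ k / (k.factorial : ℝ))
      = T * ((lam * T) ^ (k - 1) / ((k-1).factorial : ℝ)) := by
    have hfack : (k.factorial : ℝ) = (k : ℝ) * ((k-1).factorial : ℝ) := by
      conv_lhs => rw [← hkk]
      rw [Nat.factorial_succ]
      push_cast [hkk]
      ring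
    have hpow : (lam * T) ^ k = (lam * T) ^ (k - 1) * (lam * T) := by
      conv_lhs => rw [← hkk, pow_succ]
    have hkpos : (0:ℝ) < (k:ℝ) := by positivity
    rw [hfack, hpow]
    field_simp
  -- final assembly
  rw [gt_iff_lt, lt_div_iff₀ (hFval ▸ hF), hFval, hM1, hsplit, hMlow, hMhigh]
  have hEpos : 0 < E := Real.exp_pos _
  have hmain : 0 < T * E * (S - (lam * T) ^ (k - 1) / ((k-1).factorial : ℝ)) := by
    apply mul_pos (mul_pos hT hEpos)
    linarith
  rw [hS2eq]
  nlinarith [hmain, hid, hEpos]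
end

section
/- Let C be a two-component hyperexponential random variable: with probability p ∈ (0,1) it is Exponential(α) and with probability 1−p it is Exponential(β), where α ≠ β are positive. Then for every T > 0, E[C − T | C > T] > E[C]. -/
open MeasureTheory ProbabilityTheory Real

lemma aux_integral_exp_neg_mul_Ioi {b : ℝ} (hb : 0 < b) (c : ℝ) :
    ∫ x in Set.Ioi c, Real.exp (-(b * x)) = Real.exp (-(b * c)) / b := by
  have hderiv : ∀ x ∈ Set.Ici c, HasDerivAt (fun x => -Real.exp (-(b * x)) / b)
      (Real.exp (-(b * x))) x := by
    intro x _
    have h : HasDerivAt (fun x => -Real.exp (-(b * x)) / b) (-(Real.exp (-(b * x)) * -(b * 1)) / b) x :=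
      (((hasDerivAt_id x).const_mul b).neg.exp.neg.div_const b)
    convert h using 1
    field_simp
  have hintg : MeasureTheory.IntegrableOn (fun x : ℝ => Real.exp (-(b * x))) (Set.Ioi c) := by
    simpa [neg_mul] using exp_neg_integrableOn_Ioi c hb
  have htend : Filter.Tendsto (fun x => -Real.exp (-(b * x)) / b) Filter.atTop (nhds 0) := by
    have hb' : Filter.Tendsto (fun x : ℝ => b * x) Filter.atTop Filter.atTop :=
      Filter.Tendsto.const_mul_atTop hb Filter.tendsto_id
    have h1 : Filter.Tendsto (fun x : ℝ => Real.exp (-(b * x))) Filter.atTop (nhds 0) := by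
      exact Real.tendsto_exp_atBot.comp (Filter.tendsto_neg_atBot_iff.2 hb')
    have := (h1.neg).div_const b
    simpa using this
  rw [MeasureTheory.integral_Ioi_of_hasDerivAt_of_tendsto' hderiv hintg htend]
  ring

/-- Let `C` be a two-component hyperexponential random variable with
survival function `P(C > t) = p e^(−αt) + (1−p) e^(−βt)` for `t ≥ 0`, where
`p ∈ (0,1)` and `α ≠ β` are positive. Then for every `T > 0`,
`E[C − T | C > T] > E[C]`. -/
theorem hyperexp_cond_tail_mean_gt_mean {Ω : Type*} [MeasurableSpace Ω] (μ : Measure Ω)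
    [IsProbabilityMeasure μ] (C : Ω → ℝ) (hmeas : Measurable C)
    (hpos : ∀ ω, 0 < C ω) (hint : Integrable C μ)
    (p α β : ℝ) (hp : 0 < p) (hp1 : p < 1) (hα : 0 < α) (hβ : 0 < β) (hne : α ≠ β)
    (hsurv : ∀ t : ℝ, 0 ≤ t →
      (μ {ω | t < C ω}).toReal = p * Real.exp (-(α * t)) + (1 - p) * Real.exp (-(β * t)))
    (T : ℝ) (hT : 0 < T) :
    (∫ ω in {ω | T < C ω}, (C ω - T) ∂μ) / (μ {ω | T < C ω}).toReal > ∫ ω, C ω ∂μ := by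
  have h1p : 0 < 1 - p := by linarith
  have iα : MeasureTheory.IntegrableOn (fun t : ℝ => Real.exp (-(α * t))) (Set.Ioi 0) := by
    simpa [neg_mul] using exp_neg_integrableOn_Ioi 0 hα
  have iβ : MeasureTheory.IntegrableOn (fun t : ℝ => Real.exp (-(β * t))) (Set.Ioi 0) := by
    simpa [neg_mul] using exp_neg_integrableOn_Ioi 0 hβ
  -- the mean of C
  have hCnn : 0 ≤ᵐ[μ] C := Filter.Eventually.of_forall fun ω => (hpos ω).le
  have hmean : ∫ ω, C ω ∂μ = p / α + (1 - p) / β := by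
    rw [hint.integral_eq_integral_meas_lt hCnn]
    have hcong : ∀ t ∈ Set.Ioi (0 : ℝ), (μ {a | t < C a}).toReal
        = p * Real.exp (-(α * t)) + (1 - p) * Real.exp (-(β * t)) :=
      fun t ht => hsurv t (le_of_lt ht)
    simp only [measureReal_def]
    rw [MeasureTheory.setIntegral_congr_fun measurableSet_Ioi hcong,
      MeasureTheory.integral_add (iα.const_mul p) (iβ.const_mul (1 - p)),
      integral_const_mul, integral_const_mul,
      aux_integral_exp_neg_mul_Ioi hα 0, aux_integral_exp_neg_mul_Ioi hβ 0]
    simp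
    ring
  -- the tail integral
  set g : Ω → ℝ := fun ω => max (C ω - T) 0 with hg
  have hgint : Integrable g μ := (hint.sub (integrable_const T)).sup (integrable_const 0)
  have hgnn : 0 ≤ᵐ[μ] g := Filter.Eventually.of_forall fun ω => le_max_right _ _
  have hs : MeasurableSet {ω | T < C ω} := measurableSet_lt measurable_const hmeas
  have htail : ∫ ω in {ω | T < C ω}, (C ω - T) ∂μ
      = p * Real.exp (-(α * T)) / α + (1 - p) * Real.exp (-(β * T)) / β := by
    have hsplit : ∫ ω, g ω ∂μ = ∫ ω in {ω | T < C ω}, g ω ∂μ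
        + ∫ ω in {ω | T < C ω}ᶜ, g ω ∂μ := (MeasureTheory.integral_add_compl hs hgint).symm
    have hcompl : ∫ ω in {ω | T < C ω}ᶜ, g ω ∂μ = 0 := by
      rw [MeasureTheory.setIntegral_congr_fun hs.compl
        (fun ω hω => by
          simp only [Set.mem_compl_iff, Set.mem_setOf_eq, not_lt] at hω
          show max (C ω - T) 0 = 0
          exact max_eq_right (by linarith))]
      simp
    have hon : ∫ ω in {ω | T < C ω}, g ω ∂μ = ∫ ω in {ω | T < C ω}, (C ω - T) ∂μ := by
      apply MeasureTheory.setIntegral_congr_fun hs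
      intro ω hω
      simp only [Set.mem_setOf_eq] at hω
      show max (C ω - T) 0 = C ω - T
      exact max_eq_left (by linarith)
    have hlayer : ∫ ω, g ω ∂μ = ∫ t in Set.Ioi (0 : ℝ), (μ {a | t < g a}).toReal :=
      hgint.integral_eq_integral_meas_lt hgnn
    have hmeaseq : ∀ t ∈ Set.Ioi (0 : ℝ), (μ {a | t < g a}).toReal
        = (p * Real.exp (-(α * T))) * Real.exp (-(α * t))
          + ((1 - p) * Real.exp (-(β * T))) * Real.exp (-(β * t)) := by
      intro t ht
      simp only [Set.mem_Ioi] at ht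
      have hset : {a | t < g a} = {a | T + t < C a} := by
        ext a
        simp only [Set.mem_setOf_eq, hg, lt_max_iff]
        constructor
        · rintro (h | h) <;> linarith
        · intro h; left; linarith
      rw [hset, hsurv (T + t) (by linarith),
        show -(α * (T + t)) = -(α * T) + -(α * t) by ring, Real.exp_add,
        show -(β * (T + t)) = -(β * T) + -(β * t) by ring, Real.exp_add]
      ring
    have : ∫ ω, g ω ∂μ
        = p * Real.exp (-(α * T)) / α + (1 - p) * Real.exp (-(β * T)) / β := by
      rw [hlayer, MeasureTheory.setIntegral_congr_fun measurableSet_Ioi hmeaseq,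
        MeasureTheory.integral_add (iα.const_mul _) (iβ.const_mul _),
        integral_const_mul, integral_const_mul,
        aux_integral_exp_neg_mul_Ioi hα 0, aux_integral_exp_neg_mul_Ioi hβ 0]
      simp
      ring
    rw [hsplit, hcompl] at this
    linarith [this, hon]
  -- denominator
  have hden : (μ {ω | T < C ω}).toReal
      = p * Real.exp (-(α * T)) + (1 - p) * Real.exp (-(β * T)) := hsurv T hT.le
  set A := Real.exp (-(α * T)) with hA
  set B := Real.exp (-(β * T)) with hB
  have hApos : 0 < A := Real.exp_pos _
  have hBpos : 0 < B := Real.exp_pos _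
  have hdenpos : 0 < p * A + (1 - p) * B :=
    add_pos (mul_pos hp hApos) (mul_pos h1p hBpos)
  have key : 0 < (β - α) * (A - B) := by
    rcases lt_or_gt_of_ne hne with h | h
    · have : B < A := Real.exp_lt_exp.2 (by nlinarith)
      nlinarith
    · have : A < B := Real.exp_lt_exp.2 (by nlinarith)
      nlinarith
  rw [hmean, htail, hden, gt_iff_lt, lt_div_iff₀ hdenpos]
  rw [div_add_div _ _ hα.ne' hβ.ne', div_add_div _ _ hα.ne' hβ.ne',
    div_mul_eq_mul_div, div_lt_div_iff₀ (mul_pos hα hβ) (mul_pos hα hβ)]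
  nlinarith [mul_pos (mul_pos hp h1p) key, mul_pos hα hβ,
    mul_pos (mul_pos (mul_pos hp h1p) key) (mul_pos hα hβ)]
end

section
/- If C ~ Pareto(x_min, α) with α > 1 and T > x_min, then κ(T) = E[min{C,T}]/F_C(T) ≤ E[C] = α x_min/(α−1) if and only if T ≥ α x_min. -/
open MeasureTheory Real Set

/-- If `C ~ Pareto(x_min, α)` with `α > 1` and `T > x_min`, then
`κ(T) = E[min{C,T}]/F_C(T) ≤ E[C] = α x_min/(α−1)` if and only if `T ≥ α x_min`. -/
theorem pareto_kappa_le_mean_iff {Ω : Type*} [MeasurableSpace Ω] (μ : Measure Ω)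
    [IsProbabilityMeasure μ] (C : Ω → ℝ) (hmeas : Measurable C)
    (xmin α : ℝ) (hx : 0 < xmin) (hα : 1 < α)
    (hcdf : ∀ t : ℝ, xmin ≤ t → (μ {ω | C ω ≤ t}).toReal = 1 - (xmin / t) ^ α)
    (hsupp : ∀ ω, xmin ≤ C ω) (hint : Integrable C μ)
    (T : ℝ) (hT : xmin < T) :
    (∫ ω, min (C ω) T ∂μ) / (μ {ω | C ω ≤ T}).toReal ≤ α * xmin / (α - 1) ↔
      α * xmin ≤ T := by
  have hT0 : 0 < T := hx.trans hT
  set p := xmin / T with hp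
  have hp0 : 0 < p := div_pos hx hT0
  have hp1 : p < 1 := (div_lt_one hT0).mpr hT
  have hα0 : (0:ℝ) < α := by linarith
  have hα1 : (0:ℝ) < α - 1 := by linarith
  set q := p ^ (α - 1) with hqdef
  have hq0 : 0 < q := rpow_pos_of_pos hp0 _
  have hpq : p ^ α = q * p := by
    rw [hqdef, show α = (α - 1) + 1 by ring, rpow_add hp0, rpow_one]; norm_num
  -- tail probabilities
  have htail : ∀ t : ℝ, xmin ≤ t → (μ {a | t < C a}).toReal = (xmin / t) ^ α := by
    intro t ht
    have hms : MeasurableSet {ω | C ω ≤ t} := hmeas measurableSet_Iic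
    have hset : {a | t < C a} = {ω | C ω ≤ t}ᶜ := by ext a; simp [not_le]
    rw [hset, measure_compl hms (measure_ne_top μ _), measure_univ,
      ENNReal.toReal_sub_of_le prob_le_one ENNReal.one_ne_top, ENNReal.toReal_one,
      hcdf t ht]
    ring
  -- integrability and nonnegativity of the truncated variable
  have hintmin : Integrable (fun ω => min (C ω) T) μ := hint.inf (integrable_const T)
  have hnn : 0 ≤ᵐ[μ] fun ω => min (C ω) T :=
    Filter.Eventually.of_forall fun ω => le_min (hx.le.trans (hsupp ω)) hT0.le
  have key := hintmin.integral_eq_integral_meas_lt hnn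
  -- the tail function of min(C, T) agrees with an explicit function on (0, ∞)
  set h : ℝ → ℝ := (Ioc 0 xmin).indicator (fun _ => 1) +
    (Ioo xmin T).indicator (fun t => xmin ^ α * t ^ (-α)) with hh
  have hgh : EqOn (fun t => (μ {a | t < min (C a) T}).toReal) h (Ioi (0:ℝ)) := by
    intro t ht
    simp only [mem_Ioi] at ht
    show (μ {a | t < min (C a) T}).toReal = h t
    rcases lt_or_ge t T with htT | htT
    · -- t < T : the event is {t < C}
      have hset : {a | t < min (C a) T} = {a | t < C a} := by
        ext a; simp only [mem_setOf_eq, lt_min_iff]; exact ⟨fun h => h.1, fun h => ⟨h, htT⟩⟩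
      rw [hset]
      rcases lt_or_ge t xmin with h1 | h1
      · have hset2 : {a | t < C a} = univ := by
          ext a; simp only [mem_setOf_eq, mem_univ, iff_true]
          exact h1.trans_le (hsupp a)
        rw [hset2, measure_univ, ENNReal.toReal_one]
        have : h t = 1 := by
          simp [hh, indicator_apply, mem_Ioc, mem_Ioo, ht, h1.le, not_lt.mpr h1.le]
        rw [this]
      · rcases eq_or_lt_of_le h1 with h2 | h2
        · rw [htail t h1, ← h2, div_self hx.ne', one_rpow]
          simp [hh, indicator_apply, mem_Ioc, mem_Ioo, ht, ← h2, hx]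
        · rw [htail t h1]
          have hx' : (xmin / t) ^ α = xmin ^ α * t ^ (-α) := by
            rw [div_rpow hx.le (by linarith : (0:ℝ) ≤ t), rpow_neg (by linarith : (0:ℝ) ≤ t),
              div_eq_mul_inv]
          rw [hx']
          simp [hh, indicator_apply, mem_Ioc, mem_Ioo, not_le.mpr h2, h2, htT]
    · -- t ≥ T : the event is empty
      have hset : {a | t < min (C a) T} = ∅ := by
        ext a; simp only [mem_setOf_eq, lt_min_iff, mem_empty_iff_false, iff_false, not_and]
        exact fun _ => not_lt.mpr htT
      rw [hset, measure_empty, ENNReal.toReal_zero]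
      have : h t = 0 := by
        simp [hh, indicator_apply, mem_Ioc, mem_Ioo, not_le.mpr (hT.trans_le htT),
          not_lt.mpr htT]
      rw [this]
  -- integrability of the pieces
  have hint2 : IntegrableOn (fun t : ℝ => xmin ^ α * t ^ (-α)) (Ioo xmin T) volume := by
    have hc : ContinuousOn (fun t : ℝ => xmin ^ α * t ^ (-α)) (Icc xmin T) :=
      continuousOn_const.mul (ContinuousOn.rpow_const continuousOn_id
        (fun x hx' => Or.inl (ne_of_gt (hx.trans_le hx'.1))))
    exact hc.integrableOn_Icc.mono_set Ioo_subset_Icc_self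
  have i1 : Integrable ((Ioc (0:ℝ) xmin).indicator (fun _ => (1:ℝ))) volume :=
    (integrableOn_const measure_Ioc_lt_top.ne).integrable_indicator measurableSet_Ioc
  have i2 : Integrable ((Ioo xmin T).indicator (fun t : ℝ => xmin ^ α * t ^ (-α))) volume :=
    hint2.integrable_indicator measurableSet_Ioo
  -- compute the integral of h over (0, ∞)
  have hIh : ∫ t in Ioi (0:ℝ), h t =
      xmin + xmin ^ α * ((T ^ (-α + 1) - xmin ^ (-α + 1)) / (-α + 1)) := by
    rw [hh]
    simp only [Pi.add_apply]
    rw [integral_add i1.integrableOn i2.integrableOn,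
      setIntegral_indicator measurableSet_Ioc, setIntegral_indicator measurableSet_Ioo,
      show Ioi (0:ℝ) ∩ Ioc 0 xmin = Ioc 0 xmin from
        inter_eq_self_of_subset_right Ioc_subset_Ioi_self,
      show Ioi (0:ℝ) ∩ Ioo xmin T = Ioo xmin T from
        inter_eq_self_of_subset_right (fun x hx' => hx.trans hx'.1)]
    congr 1
    · rw [setIntegral_const, Real.volume_real_Ioc_of_le hx.le, smul_eq_mul, mul_one]
      ring
    · rw [integral_const_mul]
      congr 1
      rw [← integral_Ioc_eq_integral_Ioo, ← intervalIntegral.integral_of_le hT.le,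
        integral_rpow (Or.inr ⟨by linarith, fun hc => by
          rcases hc with ⟨h1, _⟩
          rw [inf_le_iff] at h1
          rcases h1 with h1 | h1 <;> linarith⟩)]
  -- exact value of the truncated mean
  have e1 : xmin ^ α * xmin ^ (-α + 1) = xmin := by
    rw [← rpow_add hx]; norm_num
  have e2 : xmin ^ α * T ^ (-α + 1) = xmin * q := by
    have h1 : xmin * xmin ^ (α - 1) = xmin ^ α := by
      rw [show xmin * xmin ^ (α - 1) = xmin ^ (1:ℝ) * xmin ^ (α - 1) by rw [rpow_one],
        ← rpow_add hx]
      congr 1; ring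
    have h2 : T ^ (-α + 1) = (T ^ (α - 1))⁻¹ := by
      rw [show (-α + 1) = -(α - 1) by ring, rpow_neg hT0.le]
    rw [← h1, h2, hqdef, hp, div_rpow hx.le hT0.le]
    have h3 : (0:ℝ) < T ^ (α - 1) := rpow_pos_of_pos hT0 _
    field_simp
  have hA : ∫ ω, min (C ω) T ∂μ = xmin + (xmin - xmin * q) / (α - 1) := by
    rw [key, setIntegral_congr_fun measurableSet_Ioi (show EqOn (fun t => μ.real {a | t < min (C a) T}) h (Ioi 0) from hgh), hIh]
    congr 1
    rw [mul_div_assoc'] -- xmin^α * (x/y) = (xmin^α * x)/y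
    rw [mul_sub, e1, e2]
    rw [show (-α + 1) = -(α - 1) by ring, div_neg]
    ring
  have hF : (μ {ω | C ω ≤ T}).toReal = 1 - q * p := by
    rw [hcdf T hT.le, ← hp, hpq]
  have hF0 : (0:ℝ) < 1 - q * p := by
    have : p ^ α < 1 := rpow_lt_one hp0.le hp1 hα0
    rw [hpq] at this; linarith
  have hpT : p * T = xmin := div_mul_cancel₀ xmin hT0.ne'
  rw [hA, hF, div_le_iff₀ hF0,
    show xmin + (xmin - xmin * q) / (α - 1) = (α * xmin - xmin * q) / (α - 1) by
      field_simp; ring,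
    show α * xmin / (α - 1) * (1 - q * p) = α * xmin * (1 - q * p) / (α - 1) by ring,
    div_le_div_iff_of_pos_right hα1]
  constructor
  · intro hh'
    have h3 : α * p ≤ 1 := by nlinarith [mul_pos hx hq0]
    calc α * xmin = α * p * T := by rw [← hpT]; ring
      _ ≤ 1 * T := mul_le_mul_of_nonneg_right h3 hT0.le
      _ = T := one_mul T
  · intro hh'
    have h3 : α * p ≤ 1 := by
      rw [hp, show α * (xmin / T) = α * xmin / T by ring, div_le_one hT0]
      exact hh'
    nlinarith [mul_pos hx hq0]
end

section
/- For C ~ Pareto(x_min, α) with α > 1, writing τ = T/x_min > 1, the effective cost equals κ(τ) = (x_min/(α−1)) · (α τ^α − τ)/(τ^α − 1). -/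
open MeasureTheory Real Set

/-- For `C ~ Pareto(x_min, α)` with `α > 1` and deadline `T > x_min`,
writing `τ = T/x_min > 1`, the effective cost equals
`κ(T) = (x_min/(α−1)) · (α τ^α − τ)/(τ^α − 1)`. -/
theorem pareto_kappa_formula {Ω : Type*} [MeasurableSpace Ω] (μ : Measure Ω)
    [IsProbabilityMeasure μ] (C : Ω → ℝ) (hmeas : Measurable C)
    (xmin α : ℝ) (hx : 0 < xmin) (hα : 1 < α)
    (hcdf : ∀ t : ℝ, xmin ≤ t → (μ {ω | C ω ≤ t}).toReal = 1 - (xmin / t) ^ α)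
    (hsupp : ∀ ω, xmin ≤ C ω) (hint : Integrable C μ)
    (T : ℝ) (hT : xmin < T) :
    (∫ ω, min (C ω) T ∂μ) / (μ {ω | C ω ≤ T}).toReal =
      (xmin / (α - 1)) * (α * (T / xmin) ^ α - T / xmin) / ((T / xmin) ^ α - 1) := by
  have hT0 : 0 < T := hx.trans hT
  have hτ : 1 < T / xmin := (one_lt_div hx).mpr hT
  have hα0 : 0 < α := lt_trans one_pos hα
  set A : ℝ := (T / xmin) ^ α with hA
  have hA1 : 1 < A := (Real.one_lt_rpow_iff_of_pos (lt_trans one_pos hτ)).mpr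
    (Or.inl ⟨hτ, hα0⟩)
  have hinvA : (xmin / T) ^ α = A⁻¹ := by
    rw [hA, ← Real.inv_rpow (by positivity), ← one_div, one_div_div]
  -- integrability of min
  have hfint : Integrable (fun ω => min (C ω) T) μ := hint.inf (integrable_const T)
  have hfnn : 0 ≤ᵐ[μ] fun ω => min (C ω) T := by
    filter_upwards with ω
    exact le_min (hx.le.trans (hsupp ω)) hT0.le
  -- layer cake
  have hlc := hfint.integral_eq_integral_meas_lt hfnn
  -- identify the tail function
  set g : ℝ → ℝ := fun t => if t < xmin then 1 else if t < T then (xmin / t) ^ α else 0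
    with hg
  have htail : ∀ t ∈ Ioi (0:ℝ),
      ENNReal.toReal (μ {ω | t < min (C ω) T}) = g t := by
    intro t ht
    simp only [hg]
    rcases lt_or_ge t xmin with h1 | h1
    · rw [if_pos h1]
      have : {ω | t < min (C ω) T} = univ := by
        ext ω; simp only [mem_setOf_eq, mem_univ, iff_true]
        exact lt_min (lt_of_lt_of_le h1 (hsupp ω)) (h1.trans hT)
      rw [this, measure_univ]; simp
    · rw [if_neg (not_lt.mpr h1)]
      rcases lt_or_ge t T with h2 | h2
      · rw [if_pos h2]
        have hset : {ω | t < min (C ω) T} = {ω | C ω ≤ t}ᶜ := by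
          ext ω
          simp only [mem_setOf_eq, mem_compl_iff, not_le, lt_min_iff]
          exact ⟨fun h => h.1, fun h => ⟨h, h2⟩⟩
        rw [hset, measure_compl (measurableSet_le hmeas measurable_const) (measure_ne_top μ _),
          measure_univ, ENNReal.toReal_sub_of_le prob_le_one ENNReal.one_ne_top,
          hcdf t h1]
        simp
      · rw [if_neg (not_lt.mpr h2)]
        have : {ω | t < min (C ω) T} = ∅ := by
          ext ω
          simp only [mem_setOf_eq, mem_empty_iff_false, iff_false, not_lt]
          exact le_trans (min_le_right _ _) h2
        rw [this]; simp
  simp only [Measure.real] at hlc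
  rw [setIntegral_congr_fun measurableSet_Ioi htail] at hlc
  -- compute the pieces
  have hg1 : ∫ t in Ioc 0 xmin, g t = xmin := by
    rw [integral_Ioc_eq_integral_Ioo,
      setIntegral_congr_fun measurableSet_Ioo
        (f := g) (g := fun _ => (1:ℝ)) (fun t ht => by simp only [hg]; rw [if_pos ht.2])]
    simp [Real.volume_Ioo, hx.le]
  have hcont : ContinuousOn (fun t : ℝ => (xmin / t) ^ α) (Icc xmin T) := by
    apply ContinuousOn.rpow_const
    · exact continuousOn_const.div continuousOn_id (fun t ht => (hx.trans_le ht.1).ne')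
    · intro t ht; left; exact (div_pos hx (hx.trans_le ht.1)).ne'
  have hint2 : IntegrableOn (fun t : ℝ => (xmin / t) ^ α) (Ioc xmin T) :=
    (hcont.integrableOn_Icc).mono_set Ioc_subset_Icc_self
  have hgeq2 : ∀ t ∈ Ioo xmin T, g t = (xmin / t) ^ α := by
    intro t ht
    simp only [hg]
    rw [if_neg (not_lt.mpr ht.1.le), if_pos ht.2]
  have hint2' : IntegrableOn g (Ioc xmin T) := by
    rw [integrableOn_Ioc_iff_integrableOn_Ioo] at hint2 ⊢
    exact hint2.congr_fun (fun t ht => (hgeq2 t ht).symm) measurableSet_Ioo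
  have hg2 : ∫ t in Ioc xmin T, g t
      = xmin ^ α * ((T ^ (-α + 1) - xmin ^ (-α + 1)) / (-α + 1)) := by
    rw [integral_Ioc_eq_integral_Ioo,
      setIntegral_congr_fun measurableSet_Ioo hgeq2, ← integral_Ioc_eq_integral_Ioo,
      ← intervalIntegral.integral_of_le hT.le]
    have : ∀ t ∈ uIcc xmin T, (xmin / t) ^ α = xmin ^ α * t ^ (-α) := by
      intro t ht
      rw [uIcc_of_le hT.le] at ht
      have ht0 : 0 < t := hx.trans_le ht.1
      rw [Real.div_rpow hx.le ht0.le, Real.rpow_neg ht0.le, div_eq_mul_inv]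
    rw [intervalIntegral.integral_congr this, intervalIntegral.integral_const_mul,
      integral_rpow (Or.inr ⟨by intro h; nlinarith [neg_eq_iff_eq_neg.mp h],
        by rw [uIcc_of_le hT.le]; intro h; exact absurd h.1 (not_le.mpr hx)⟩)]
  have hint1 : IntegrableOn g (Ioc 0 xmin) := by
    rw [integrableOn_Ioc_iff_integrableOn_Ioo]
    exact ((integrableOn_const_iff (C := (1:ℝ))).mpr (Or.inr measure_Ioo_lt_top)).congr_fun
      (fun t ht => by simp only [hg]; rw [if_pos ht.2]) measurableSet_Ioo
  have hg3 : ∫ t in Ioi T, g t = 0 := by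
    rw [setIntegral_congr_fun measurableSet_Ioi
      (f := g) (g := fun _ => (0:ℝ)) (fun t ht => by
        simp only [hg]
        rw [if_neg (not_lt.mpr (le_trans hT.le (le_of_lt ht))),
          if_neg (not_lt.mpr (le_of_lt ht))])]
    simp
  -- assemble
  have hunion1 : Ioi (0:ℝ) = Ioc 0 T ∪ Ioi T := (Ioc_union_Ioi_eq_Ioi hT0.le).symm
  have hunion2 : Ioc (0:ℝ) T = Ioc 0 xmin ∪ Ioc xmin T :=
    (Ioc_union_Ioc_eq_Ioc hx.le hT.le).symm
  have hintT : IntegrableOn g (Ioc 0 T) := by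
    rw [hunion2]; exact hint1.union hint2'
  have hint0 : IntegrableOn g (Ioi T) := by
    apply ((integrableOn_const_iff (C := (0:ℝ))).mpr (Or.inl (by simp))).congr_fun _ measurableSet_Ioi
    · intro t ht
      simp only [hg]
      rw [if_neg (not_lt.mpr (le_trans hT.le (le_of_lt ht))),
        if_neg (not_lt.mpr (le_of_lt ht))]
  have hsplit : ∫ t in Ioi (0:ℝ), g t
      = xmin + xmin ^ α * ((T ^ (-α + 1) - xmin ^ (-α + 1)) / (-α + 1)) := by
    rw [hunion1, setIntegral_union (Ioc_disjoint_Ioi le_rfl) measurableSet_Ioi hintT hint0,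
      hunion2, setIntegral_union (Ioc_disjoint_Ioc_of_le le_rfl) measurableSet_Ioc hint1 hint2',
      hg1, hg2, hg3, add_zero]
  rw [hlc, hsplit, hcdf T hT.le, hinvA]
  -- now algebra
  have hTx : T = (T / xmin) * xmin := by field_simp
  have h1 : xmin ^ α * T ^ (-α + 1) = (T / xmin) * xmin * A⁻¹ := by
    rw [← hinvA, Real.rpow_add hT0, Real.rpow_one, Real.div_rpow hx.le hT0.le,
      Real.rpow_neg hT0.le]
    field_simp
  have h2 : xmin ^ α * xmin ^ (-α + 1) = xmin := by
    rw [← Real.rpow_add hx]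
    simp
  have hα1 : α - 1 ≠ 0 := by intro h; linarith
  have hα1' : -α + 1 ≠ 0 := by intro h; linarith
  have hA0 : A ≠ 0 := by positivity
  have hA1' : A - 1 ≠ 0 := by intro h; linarith
  have hAi : (1:ℝ) - A⁻¹ ≠ 0 := by
    have : A⁻¹ < 1 := by
      rw [inv_lt_one_iff₀]; right; exact hA1
    intro h; linarith
  have hE : xmin ^ α * ((T ^ (-α + 1) - xmin ^ (-α + 1)) / (-α + 1))
      = (T / xmin * xmin * A⁻¹ - xmin) / (-α + 1) := by
    rw [mul_div_assoc', mul_sub, h1, h2]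
  rw [hE]
  field_simp
  ring
end

section
/- For C ~ LogLogistic(α, β) with β ∈ (1,2], the effective cost κ(T) = (1 + (T/α)^β)(α/β) B(F_C(T); 1/β, 1 − 1/β) is strictly increasing in T on (0, ∞). -/
open Real MeasureTheory

/-- Incomplete beta function `B(x; a, b) = ∫_0^x u^(a−1)(1−u)^(b−1) du`. -/
noncomputable def incBeta (x a b : ℝ) : ℝ :=
  ∫ u in Set.Ioc (0 : ℝ) x, u ^ (a - 1) * (1 - u) ^ (b - 1)

lemma incBeta_integrableOn {y a b : ℝ} (hy0 : 0 ≤ y) (hy1 : y < 1)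
    (ha : 0 < a) (hb : b ≤ 1) :
    IntegrableOn (fun u : ℝ => u ^ (a - 1) * (1 - u) ^ (b - 1)) (Set.Ioc 0 y) := by
  have hmeas : AEStronglyMeasurable (fun u : ℝ => u ^ (a - 1) * (1 - u) ^ (b - 1))
      (volume.restrict (Set.Ioc 0 y)) := by
    refine ContinuousOn.aestronglyMeasurable (fun u hu => ?_) measurableSet_Ioc
    exact ((Real.continuousAt_rpow_const u (a - 1) (Or.inl hu.1.ne')).mul
      ((continuousAt_const.sub continuousAt_id).rpow_const
        (Or.inl (by intro h; simp only [Pi.sub_apply, id_eq] at h; linarith [hu.2])))).continuousWithinAt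
  have hg : IntegrableOn (fun u : ℝ => (1 - y) ^ (b - 1) * u ^ (a - 1)) (Set.Ioc 0 y) := by
    have := (intervalIntegral.intervalIntegrable_rpow' (a := 0) (b := y)
      (r := a - 1) (by linarith)).const_mul ((1 - y) ^ (b - 1))
    rw [intervalIntegrable_iff_integrableOn_Ioc_of_le hy0] at this
    exact this
  refine (hg.mono' hmeas ?_)
  filter_upwards [MeasureTheory.ae_restrict_mem measurableSet_Ioc] with u hu
  have hu0 : 0 < u := hu.1
  have huy : u ≤ y := hu.2
  have h1u : 0 < 1 - u := by linarith
  have h1y : 0 < 1 - y := by linarith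
  have hnn : 0 ≤ u ^ (a - 1) * (1 - u) ^ (b - 1) :=
    mul_nonneg (rpow_nonneg hu0.le _) (rpow_nonneg h1u.le _)
  rw [Real.norm_of_nonneg hnn, mul_comm ((1 - y) ^ (b - 1))]
  exact mul_le_mul_of_nonneg_left
    (rpow_le_rpow_of_nonpos h1y (by linarith) (by linarith)) (rpow_nonneg hu0.le _)

lemma incBeta_strict {x y a b : ℝ} (hx0 : 0 ≤ x) (hxy : x < y) (hy1 : y < 1)
    (ha : 0 < a) (hb : b ≤ 1) : incBeta x a b < incBeta y a b := by
  have hInt : IntegrableOn (fun u : ℝ => u ^ (a - 1) * (1 - u) ^ (b - 1)) (Set.Ioc 0 y) :=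
    incBeta_integrableOn (by linarith) hy1 ha hb
  have hIntx : IntegrableOn (fun u : ℝ => u ^ (a - 1) * (1 - u) ^ (b - 1)) (Set.Ioc 0 x) :=
    hInt.mono_set (Set.Ioc_subset_Ioc_right hxy.le)
  have hIntxy : IntegrableOn (fun u : ℝ => u ^ (a - 1) * (1 - u) ^ (b - 1)) (Set.Ioc x y) :=
    hInt.mono_set (Set.Ioc_subset_Ioc_left hx0)
  have hsplit : incBeta y a b = incBeta x a b +
      ∫ u in Set.Ioc x y, u ^ (a - 1) * (1 - u) ^ (b - 1) := by
    rw [incBeta, incBeta, ← MeasureTheory.setIntegral_union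
      (Set.Ioc_disjoint_Ioc_of_le le_rfl) measurableSet_Ioc hIntx hIntxy,
      Set.Ioc_union_Ioc_eq_Ioc hx0 hxy.le]
  rw [hsplit]
  have hpos : 0 < ∫ u in Set.Ioc x y, u ^ (a - 1) * (1 - u) ^ (b - 1) := by
    have := intervalIntegral.intervalIntegral_pos_of_pos_on
      (f := fun u : ℝ => u ^ (a - 1) * (1 - u) ^ (b - 1)) (a := x) (b := y)
      (by rw [intervalIntegrable_iff_integrableOn_Ioc_of_le hxy.le]; exact hIntxy)
      (fun u hu => mul_pos (rpow_pos_of_pos (lt_of_le_of_lt hx0 hu.1) _)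
        (rpow_pos_of_pos (by linarith [hu.2]) _)) hxy
    rwa [intervalIntegral.integral_of_le hxy.le] at this
  linarith

/-- For `C ~ LogLogistic(α, β)` with `β ∈ (1,2]`, the effective cost
`κ(T) = (1 + (T/α)^β)(α/β) B(F_C(T); 1/β, 1 − 1/β)`, with `F_C(T) = 1/(1+(T/α)^(−β))`,
is strictly increasing in `T` on `(0, ∞)`. -/
theorem loglogistic_kappa_strictMono (α β : ℝ) (hα : 0 < α) (hβ1 : 1 < β)
    (hβ2 : β ≤ 2) :
    StrictMonoOn
      (fun T : ℝ => (1 + (T / α) ^ β) * (α / β) *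
        incBeta (1 / (1 + (T / α) ^ (-β))) (1 / β) (1 - 1 / β))
      (Set.Ioi 0) := by
  have hβ0 : 0 < β := by linarith
  have ha : 0 < 1 / β := by positivity
  have hb : 1 - 1 / β ≤ 1 := by
    have : 0 < 1 / β := ha
    linarith
  -- key facts about F
  have hF : ∀ T : ℝ, 0 < T →
      1 / (1 + (T / α) ^ (-β)) = (T / α) ^ β / ((T / α) ^ β + 1) := by
    intro T hT
    have hs : 0 < (T / α) ^ β := rpow_pos_of_pos (div_pos hT hα) _
    rw [rpow_neg (div_pos hT hα).le]
    rw [one_div, eq_div_iff (by positivity)]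
    field_simp
  intro T1 hT1 T2 hT2 h12
  simp only [Set.mem_Ioi] at hT1 hT2
  have hs1 : 0 < (T1 / α) ^ β := rpow_pos_of_pos (div_pos hT1 hα) _
  have hs2 : 0 < (T2 / α) ^ β := rpow_pos_of_pos (div_pos hT2 hα) _
  have hslt : (T1 / α) ^ β < (T2 / α) ^ β :=
    rpow_lt_rpow (by positivity) ((div_lt_div_iff_of_pos_right hα).mpr h12) hβ0
  have hzero : incBeta 0 (1 / β) (1 - 1 / β) = 0 := by
    rw [incBeta, Set.Ioc_self, MeasureTheory.setIntegral_empty]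
  set s1 := (T1 / α) ^ β with hs1def
  set s2 := (T2 / α) ^ β with hs2def
  have hF1lt : s1 / (s1 + 1) < s2 / (s2 + 1) := by
    rw [div_lt_div_iff₀ (by linarith) (by linarith)]; nlinarith
  have hF1pos : 0 < s1 / (s1 + 1) := by positivity
  have hF2lt1 : s2 / (s2 + 1) < 1 := by
    rw [div_lt_one (by linarith)]; linarith
  have hF1lt1 : s1 / (s1 + 1) < 1 := by
    rw [div_lt_one (by linarith)]; linarith
  have hg1pos : 0 < incBeta (s1 / (s1 + 1)) (1 / β) (1 - 1 / β) := by
    rw [← hzero]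
    exact incBeta_strict le_rfl hF1pos hF1lt1 ha hb
  have hglt : incBeta (s1 / (s1 + 1)) (1 / β) (1 - 1 / β)
      < incBeta (s2 / (s2 + 1)) (1 / β) (1 - 1 / β) :=
    incBeta_strict hF1pos.le hF1lt hF2lt1 ha hb
  have hαβ : 0 < α / β := by positivity
  dsimp only
  rw [hF T1 hT1, hF T2 hT2]
  have hf1pos : 0 < (1 + s1) * (α / β) := by nlinarith
  have hflt : (1 + s1) * (α / β) < (1 + s2) * (α / β) := by nlinarith
  nlinarith [mul_lt_mul_of_pos_left hglt hf1pos,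
    mul_le_mul_of_nonneg_right hflt.le (le_of_lt (lt_trans hg1pos hglt))]
end

section
/- For every β ∈ (1, 2], the inequality (2/β) · B(1/2; 1/β, 1 − 1/β) ≤ B(1; 1 − 1/β, 1 + 1/β) holds, where B(x; a, b) = ∫_0^x u^{a−1}(1−u)^{b−1} du. -/
open Real MeasureTheory

lemma incBeta_ofReal_eq (a b : ℝ) (x : ℝ) (hx : x ≤ 1) :
    Set.EqOn (fun u : ℝ => ((u ^ (a - 1) * (1 - u) ^ (b - 1) : ℝ) : ℂ))
      (fun u : ℝ => (u : ℂ) ^ ((a : ℂ) - 1) * (1 - (u : ℂ)) ^ ((b : ℂ) - 1))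
      (Set.Ioc 0 x) := by
  intro u hu
  obtain ⟨hu0, hu1⟩ := hu
  have h1 : (0:ℝ) ≤ u := hu0.le
  have h2 : (0:ℝ) ≤ 1 - u := by linarith
  simp only [Complex.ofReal_mul, Complex.ofReal_cpow h1, Complex.ofReal_cpow h2]
  push_cast
  ring

lemma integrableOn_betaIntegrand (a b : ℝ) (ha : 0 < a) (hb : 0 < b) :
    IntegrableOn (fun u : ℝ => u ^ (a - 1) * (1 - u) ^ (b - 1)) (Set.Ioc (0:ℝ) 1) := by
  have h := Complex.betaIntegral_convergent (u := a) (v := b) (by simpa) (by simpa)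
  have hg : IntegrableOn (fun u : ℝ => (u : ℂ) ^ ((a : ℂ) - 1) * (1 - (u : ℂ)) ^ ((b : ℂ) - 1))
      (Set.Ioc (0:ℝ) 1) := by
    have := h.1
    simpa using this
  have hre : IntegrableOn (fun u : ℝ =>
      ((u : ℂ) ^ ((a : ℂ) - 1) * (1 - (u : ℂ)) ^ ((b : ℂ) - 1)).re) (Set.Ioc (0:ℝ) 1) := hg.re
  refine (hre.congr_fun ?_ measurableSet_Ioc : _)
  intro u hu
  have := incBeta_ofReal_eq a b 1 le_rfl hu
  simp only at this
  simp [← this]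

lemma incBeta_one_eq (a b : ℝ) (ha : 0 < a) (hb : 0 < b) :
    ((incBeta 1 a b : ℝ) : ℂ) = Complex.betaIntegral a b := by
  rw [Complex.betaIntegral, intervalIntegral.integral_of_le (by norm_num : (0:ℝ) ≤ 1)]
  rw [← setIntegral_congr_fun measurableSet_Ioc (incBeta_ofReal_eq a b 1 le_rfl)]
  rw [incBeta]
  exact (integral_ofReal (𝕜 := ℂ)).symm

lemma incBeta_identity (a : ℝ) (ha0 : 0 < a) (ha1 : a < 1) :
    incBeta 1 (1 - a) (1 + a) = a * incBeta 1 a (1 - a) := by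
  have h1 : ((incBeta 1 (1 - a) (1 + a) : ℝ) : ℂ) = Complex.betaIntegral (1 - a) (1 + a) := by
    rw [incBeta_one_eq (1 - a) (1 + a) (by linarith) (by linarith)]
    push_cast; ring_nf
  have h2 : ((incBeta 1 a (1 - a) : ℝ) : ℂ) = Complex.betaIntegral a (1 - a) := by
    rw [incBeta_one_eq a (1 - a) ha0 (by linarith)]
    push_cast; ring_nf
  have ha0' : (a : ℂ) ≠ 0 := by exact_mod_cast ha0.ne'
  have hb1 : Complex.Gamma (1 - a) * Complex.Gamma (1 + a)
      = Complex.Gamma ((1 - a) + (1 + a)) * Complex.betaIntegral (1 - a) (1 + a) :=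
    Complex.Gamma_mul_Gamma_eq_betaIntegral (by simp; linarith) (by simp; linarith)
  have hb2 : Complex.Gamma a * Complex.Gamma (1 - a)
      = Complex.Gamma (a + (1 - a)) * Complex.betaIntegral a (1 - a) :=
    Complex.Gamma_mul_Gamma_eq_betaIntegral (by simpa) (by simp; linarith)
  have hG2 : Complex.Gamma ((1 - a : ℂ) + (1 + a)) = 1 := by
    have : ((1 - a : ℂ) + (1 + a)) = 1 + 1 := by ring
    rw [this, Complex.Gamma_add_one 1 one_ne_zero, Complex.Gamma_one, mul_one]
  have hG1 : Complex.Gamma ((a : ℂ) + (1 - a)) = 1 := by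
    have : ((a : ℂ) + (1 - a)) = 1 := by ring
    rw [this, Complex.Gamma_one]
  have hGa : Complex.Gamma (1 + a) = a * Complex.Gamma a := by
    rw [add_comm, Complex.Gamma_add_one a ha0']
  have key : ((incBeta 1 (1 - a) (1 + a) : ℝ) : ℂ) = ((a * incBeta 1 a (1 - a) : ℝ) : ℂ) := by
    rw [h1]
    rw [hG2, one_mul] at hb1
    rw [hG1, one_mul] at hb2
    push_cast
    rw [h2, ← hb2, ← hb1, hGa]
    ring
  exact_mod_cast key

lemma incBeta_split (a : ℝ) (ha0 : 0 < a) (ha1 : a < 1) :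
    incBeta 1 a (1 - a) = incBeta (1/2) a (1 - a) + incBeta (1/2) (1 - a) a := by
  set f : ℝ → ℝ := fun u => u ^ (a - 1) * (1 - u) ^ (1 - a - 1) with hf
  have hInt : IntegrableOn f (Set.Ioc (0:ℝ) 1) :=
    integrableOn_betaIntegrand a (1 - a) ha0 (by linarith)
  have hii : IntervalIntegrable f volume 0 1 := by
    rw [intervalIntegrable_iff, Set.uIoc_of_le (by norm_num : (0:ℝ) ≤ 1)]
    exact hInt
  have h1 : IntervalIntegrable f volume 0 (1/2) :=
    hii.mono_set (by rw [Set.uIcc_of_le, Set.uIcc_of_le] <;> norm_num <;>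
      exact Set.Icc_subset_Icc (le_refl 0) (by norm_num))
  have h2 : IntervalIntegrable f volume (1/2) 1 :=
    hii.mono_set (by rw [Set.uIcc_of_le, Set.uIcc_of_le] <;> norm_num <;>
      exact Set.Icc_subset_Icc (by norm_num) (le_refl 1))
  have hadd := intervalIntegral.integral_add_adjacent_intervals h1 h2
  have hcomp : (∫ x in (0:ℝ)..(1/2), f (1 - x)) = ∫ x in (1/2:ℝ)..1, f x := by
    have h := intervalIntegral.integral_comp_sub_left (a := (0:ℝ)) (b := 1/2) f 1
    rw [show (1:ℝ) - 1/2 = 1/2 by norm_num, show (1:ℝ) - 0 = 1 by norm_num] at h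
    exact h
  have hfun : (fun x : ℝ => f (1 - x)) = fun v : ℝ => v ^ (1 - a - 1) * (1 - v) ^ (a - 1) := by
    funext x
    simp only [hf, sub_sub_cancel]
    ring
  rw [hfun] at hcomp
  have e0 : incBeta 1 a (1 - a) = ∫ x in (0:ℝ)..1, f x := by
    rw [intervalIntegral.integral_of_le (by norm_num : (0:ℝ) ≤ 1)]; rfl
  have e1 : incBeta (1/2) a (1 - a) = ∫ x in (0:ℝ)..(1/2), f x := by
    rw [intervalIntegral.integral_of_le (by norm_num : (0:ℝ) ≤ 1/2)]; rfl
  have e2 : incBeta (1/2) (1 - a) a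
      = ∫ x in (0:ℝ)..(1/2), x ^ (1 - a - 1) * (1 - x) ^ (a - 1) := by
    rw [intervalIntegral.integral_of_le (by norm_num : (0:ℝ) ≤ 1/2)]; rfl
  rw [e0, e1, e2, ← hadd, hcomp]

lemma incBeta_half_mono (a : ℝ) (ha : 1/2 ≤ a) (ha1 : a < 1) :
    incBeta (1/2) a (1 - a) ≤ incBeta (1/2) (1 - a) a := by
  have ha0 : 0 < a := by linarith
  have hmono : Set.Ioc (0:ℝ) (1/2) ⊆ Set.Ioc (0:ℝ) 1 :=
    Set.Ioc_subset_Ioc (le_refl 0) (by norm_num)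
  have hIf : IntegrableOn (fun u : ℝ => u ^ (a - 1) * (1 - u) ^ (1 - a - 1))
      (Set.Ioc (0:ℝ) (1/2)) :=
    (integrableOn_betaIntegrand a (1 - a) ha0 (by linarith)).mono_set hmono
  have hIg : IntegrableOn (fun u : ℝ => u ^ (1 - a - 1) * (1 - u) ^ (a - 1))
      (Set.Ioc (0:ℝ) (1/2)) :=
    (integrableOn_betaIntegrand (1 - a) a (by linarith) ha0).mono_set hmono
  refine setIntegral_mono_on hIf hIg measurableSet_Ioc ?_
  intro u hu
  obtain ⟨hu0, hu2⟩ := hu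
  have h1u : (0:ℝ) < 1 - u := by linarith
  have key : u ^ (2*a - 1) ≤ (1 - u) ^ (2*a - 1) :=
    Real.rpow_le_rpow hu0.le (by linarith) (by linarith)
  have e1 : u ^ (a - 1) = u ^ (-a) * u ^ (2*a - 1) := by
    rw [← Real.rpow_add hu0]; congr 1; ring
  have e2 : (1 - u) ^ (a - 1) = (1 - u) ^ (-a) * (1 - u) ^ (2*a - 1) := by
    rw [← Real.rpow_add h1u]; congr 1; ring
  have hexp : 1 - a - 1 = -a := by ring
  rw [hexp]
  have hpos : (0:ℝ) ≤ u ^ (-a) * (1 - u) ^ (-a) := by positivity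
  calc u ^ (a - 1) * (1 - u) ^ (-a)
      = (u ^ (-a) * (1 - u) ^ (-a)) * u ^ (2*a - 1) := by rw [e1]; ring
    _ ≤ (u ^ (-a) * (1 - u) ^ (-a)) * (1 - u) ^ (2*a - 1) :=
        mul_le_mul_of_nonneg_left key hpos
    _ = u ^ (-a) * (1 - u) ^ (a - 1) := by rw [e2]; ring

/-- For every `β ∈ (1, 2]`,
`(2/β) · B(1/2; 1/β, 1 − 1/β) ≤ B(1; 1 − 1/β, 1 + 1/β)`. -/
theorem beta_inequality (β : ℝ) (hβ1 : 1 < β) (hβ2 : β ≤ 2) :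
    (2 / β) * incBeta (1 / 2) (1 / β) (1 - 1 / β) ≤
      incBeta 1 (1 - 1 / β) (1 + 1 / β) := by
  have hβ0 : 0 < β := by linarith
  set a : ℝ := 1 / β with ha
  have ha0 : 0 < a := by positivity
  have ha2 : a < 1 := by rw [ha, div_lt_one hβ0]; linarith
  have ha1 : 1/2 ≤ a := by rw [ha, div_le_div_iff₀ (by norm_num) hβ0]; linarith
  have h2β : 2 / β = 2 * a := by rw [ha]; ring
  rw [h2β, incBeta_identity a ha0 ha2, incBeta_split a ha0 ha2]
  have hmono := incBeta_half_mono a ha1 ha2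
  nlinarith [mul_le_mul_of_nonneg_left hmono ha0.le]
end

section
/- If C ~ LogLogistic(α, β) with β ∈ (1, 2], then κ(α) ≤ E[C], where α is the median of C, κ(T) = E[min{C,T}]/F_C(T), and E[C] = α · B(1; 1 − 1/β, 1 + 1/β). -/
set_option maxHeartbeats 1600000

open MeasureTheory Real

open Set

lemma LL_integrables {β : ℝ} (hβ1 : 1 < β) :
    IntegrableOn (fun s : ℝ => 1 / (1 + s ^ β)) (Ioc 0 1) volume ∧
    IntegrableOn (fun s : ℝ => s ^ (β-2) / (1 + s ^ β)) (Ioc 0 1) volume ∧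
    IntegrableOn (fun s : ℝ => β * s ^ (β-2) / (1 + s ^ β) ^ 2) (Ioc 0 1) volume ∧
    IntegrableOn (fun s : ℝ => β * s ^ β / (1 + s ^ β) ^ 2) (Ioc 0 1) volume ∧
    IntegrableOn (fun u : ℝ => u ^ (-(1/β)) * (1-u) ^ (1/β)) (Ioc 0 1) volume := by
  have hβ0 : (0:ℝ) < β := by linarith
  have hden : ∀ x ∈ Ioc (0:ℝ) 1, (0:ℝ) < 1 + x ^ β := fun x hx => by
    have := Real.rpow_pos_of_pos hx.1 β; linarith
  have hrint : IntegrableOn (fun s : ℝ => s ^ (β-2)) (Ioc 0 1) volume :=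
    (intervalIntegral.intervalIntegrable_rpow' (by linarith)).1
  refine ⟨?_, ?_, ?_, ?_, ?_⟩
  · apply Measure.integrableOn_of_bounded (M := 1) measure_Ioc_lt_top.ne
      (by fun_prop : Measurable fun s : ℝ => 1 / (1 + s ^ β)).aestronglyMeasurable
    refine (ae_restrict_iff' measurableSet_Ioc).2 (ae_of_all _ fun x hx => ?_)
    have h1 := hden x hx
    rw [Real.norm_eq_abs, abs_of_nonneg (by positivity), div_le_one h1]
    have := Real.rpow_pos_of_pos hx.1 β
    linarith
  · apply Integrable.mono hrint (by fun_prop : Measurable fun s : ℝ =>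
      s ^ (β-2) / (1 + s ^ β)).aestronglyMeasurable
    refine (ae_restrict_iff' measurableSet_Ioc).2 (ae_of_all _ fun x hx => ?_)
    have h1 := hden x hx
    have h2 : (0:ℝ) < x ^ (β-2) := Real.rpow_pos_of_pos hx.1 _
    rw [Real.norm_eq_abs, Real.norm_eq_abs, abs_of_nonneg (by positivity),
      abs_of_nonneg h2.le, div_le_iff₀ h1]
    nlinarith [Real.rpow_pos_of_pos hx.1 β]
  · apply Integrable.mono (hrint.const_mul β) (by fun_prop : Measurable fun s : ℝ =>
      β * s ^ (β-2) / (1 + s ^ β) ^ 2).aestronglyMeasurable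
    refine (ae_restrict_iff' measurableSet_Ioc).2 (ae_of_all _ fun x hx => ?_)
    have h1 := hden x hx
    have h2 : (0:ℝ) < x ^ (β-2) := Real.rpow_pos_of_pos hx.1 _
    rw [Real.norm_eq_abs, Real.norm_eq_abs, abs_of_nonneg (by positivity),
      abs_of_nonneg (by positivity), div_le_iff₀ (by positivity)]
    nlinarith [Real.rpow_pos_of_pos hx.1 β, sq_nonneg (x ^ β), mul_pos hβ0 h2, mul_pos (mul_pos hβ0 h2) (Real.rpow_pos_of_pos hx.1 β), mul_pos (mul_pos (mul_pos hβ0 h2) (Real.rpow_pos_of_pos hx.1 β)) (Real.rpow_pos_of_pos hx.1 β)]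
  · apply Measure.integrableOn_of_bounded (M := β) measure_Ioc_lt_top.ne
      (by fun_prop : Measurable fun s : ℝ => β * s ^ β / (1 + s ^ β) ^ 2).aestronglyMeasurable
    refine (ae_restrict_iff' measurableSet_Ioc).2 (ae_of_all _ fun x hx => ?_)
    have h1 := hden x hx
    have h2 : (0:ℝ) < x ^ β := Real.rpow_pos_of_pos hx.1 _
    have h3 : x ^ β ≤ 1 := Real.rpow_le_one hx.1.le hx.2 hβ0.le
    rw [Real.norm_eq_abs, abs_of_nonneg (by positivity), div_le_iff₀ (by positivity)]
    nlinarith [sq_nonneg (x ^ β), mul_pos hβ0 h2, mul_pos hβ0 (mul_pos h2 h2)]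
  · have hrint2 : IntegrableOn (fun u : ℝ => u ^ (-(1/β))) (Ioc 0 1) volume := by
      apply (intervalIntegral.intervalIntegrable_rpow' ?_).1
      have : 1/β < 1 := by rw [div_lt_one hβ0]; exact hβ1
      linarith
    apply Integrable.mono hrint2 (by fun_prop : Measurable fun u : ℝ =>
      u ^ (-(1/β)) * (1-u) ^ (1/β)).aestronglyMeasurable
    refine (ae_restrict_iff' measurableSet_Ioc).2 (ae_of_all _ fun x hx => ?_)
    have h2 : (0:ℝ) < x ^ (-(1/β)) := Real.rpow_pos_of_pos hx.1 _
    have h3 : (0:ℝ) ≤ (1-x) ^ (1/β) := Real.rpow_nonneg (by linarith [hx.2]) _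
    have h4 : (1-x) ^ (1/β) ≤ 1 :=
      Real.rpow_le_one (by linarith [hx.2]) (by linarith [hx.1]) (by positivity)
    rw [Real.norm_eq_abs, Real.norm_eq_abs, abs_of_nonneg (by positivity), abs_of_nonneg h2.le]
    nlinarith

lemma LL_E1 {β : ℝ} (hβ1 : 1 < β) :
    ∫ u in Ioo (0:ℝ) (1/2), u ^ (-(1/β)) * (1-u) ^ (1/β) =
    ∫ s in Ioo (0:ℝ) 1, β * s ^ (β-2) / (1 + s ^ β) ^ 2 := by
  have hβ0 : (0:ℝ) < β := by linarith
  have hderiv : ∀ x ∈ Ioo (0:ℝ) 1, HasDerivWithinAt (fun s : ℝ => s ^ β / (1 + s ^ β))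
      (β * x ^ (β-1) / (1 + x ^ β) ^ 2) (Ioo 0 1) x := by
    intro x hx
    have hx0 := hx.1
    have hd : (0:ℝ) < 1 + x ^ β := by
      have := Real.rpow_pos_of_pos hx0 β; linarith
    have h1 : HasDerivAt (fun s : ℝ => s ^ β) (β * x ^ (β-1)) x :=
      Real.hasDerivAt_rpow_const (Or.inl hx0.ne')
    have h3 := h1.div (h1.const_add 1) hd.ne'
    have heq : (β * x ^ (β-1) * (1 + x ^ β) - x ^ β * (β * x ^ (β-1))) / (1 + x ^ β) ^ 2
        = β * x ^ (β-1) / (1 + x ^ β) ^ 2 := by field_simp; ring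
    rw [heq] at h3
    exact h3.hasDerivWithinAt
  have hinj : InjOn (fun s : ℝ => s ^ β / (1 + s ^ β)) (Ioo 0 1) := by
    have mono : StrictMonoOn (fun s : ℝ => s ^ β / (1 + s ^ β)) (Ioo 0 1) := by
      intro x hx y hy hxy
      have hxb : x ^ β < y ^ β := Real.rpow_lt_rpow hx.1.le hxy hβ0
      have h1 : (0:ℝ) < 1 + x ^ β := by
        have := Real.rpow_pos_of_pos hx.1 β; linarith
      have h2 : (0:ℝ) < 1 + y ^ β := by
        have := Real.rpow_pos_of_pos hy.1 β; linarith
      simp only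
      rw [div_lt_div_iff₀ h1 h2]
      nlinarith
    exact mono.injOn
  have himg : (fun s : ℝ => s ^ β / (1 + s ^ β)) '' Ioo 0 1 = Ioo 0 (1/2) := by
    ext u
    simp only [mem_image, mem_Ioo]
    constructor
    · rintro ⟨s, ⟨hs0, hs1⟩, rfl⟩
      have hb : (0:ℝ) < s ^ β := Real.rpow_pos_of_pos hs0 β
      have hb1 : s ^ β < 1 := Real.rpow_lt_one hs0.le hs1 hβ0
      constructor
      · positivity
      · rw [div_lt_iff₀ (by linarith)]; linarith
    · rintro ⟨hu0, hu2⟩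
      have hu1 : u < 1 := lt_trans hu2 (by norm_num)
      have h1u : (0:ℝ) < 1 - u := by linarith
      have hr0 : 0 < u / (1-u) := div_pos hu0 h1u
      have hr1 : u / (1-u) < 1 := by rw [div_lt_one h1u]; linarith
      refine ⟨(u/(1-u)) ^ (1/β), ⟨Real.rpow_pos_of_pos hr0 _,
        Real.rpow_lt_one hr0.le hr1 (by positivity)⟩, ?_⟩
      have hsβ : ((u/(1-u)) ^ (1/β)) ^ β = u / (1-u) := by
        rw [← Real.rpow_mul hr0.le, one_div_mul_cancel hβ0.ne', Real.rpow_one]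
      simp only [hsβ]
      field_simp
      ring
  have key := integral_image_eq_integral_abs_deriv_smul measurableSet_Ioo hderiv hinj
    (fun u : ℝ => u ^ (-(1/β)) * (1-u) ^ (1/β))
  rw [himg] at key
  rw [key]
  apply setIntegral_congr_fun measurableSet_Ioo
  intro s hs
  have hs0 := hs.1
  have hsb : (0:ℝ) < s ^ β := Real.rpow_pos_of_pos hs0 β
  have hd : (0:ℝ) < 1 + s ^ β := by linarith
  have e1 : (1:ℝ) - s ^ β / (1 + s ^ β) = 1 / (1 + s ^ β) := by field_simp; ring
  have e2 : (s ^ β / (1 + s ^ β)) ^ (-(1/β)) = s⁻¹ * ((1 + s ^ β) ^ (1/β)) := by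
    rw [Real.div_rpow hsb.le hd.le, ← Real.rpow_mul hs0.le,
      show β * -(1/β) = -1 by field_simp, Real.rpow_neg_one, Real.rpow_neg hd.le, div_eq_mul_inv, inv_inv]
  have e3 : ((1:ℝ) / (1 + s ^ β)) ^ (1/β) = ((1 + s ^ β) ^ (1/β))⁻¹ := by
    rw [one_div, Real.inv_rpow hd.le]
  have e4 : s ^ (β-1) = s ^ (β-2) * s := by
    rw [show β-1 = (β-2)+1 by ring, Real.rpow_add_one hs0.ne']
  have hX : ((1 + s ^ β) ^ (1/β)) ≠ 0 := ne_of_gt (Real.rpow_pos_of_pos hd _)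
  simp only [smul_eq_mul]
  rw [abs_of_pos (by positivity), e1, e2, e3, e4]
  field_simp

lemma LL_E2 {β : ℝ} (hβ1 : 1 < β) :
    ∫ u in Ioo (1/2:ℝ) 1, u ^ (-(1/β)) * (1-u) ^ (1/β) =
    ∫ s in Ioo (0:ℝ) 1, β * s ^ β / (1 + s ^ β) ^ 2 := by
  have hβ0 : (0:ℝ) < β := by linarith
  have hderiv : ∀ x ∈ Ioo (0:ℝ) 1, HasDerivWithinAt (fun s : ℝ => (1 + s ^ β)⁻¹)
      (-(β * x ^ (β-1)) / (1 + x ^ β) ^ 2) (Ioo 0 1) x := by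
    intro x hx
    have hx0 := hx.1
    have hd : (0:ℝ) < 1 + x ^ β := by
      have := Real.rpow_pos_of_pos hx0 β; linarith
    have h1 : HasDerivAt (fun s : ℝ => s ^ β) (β * x ^ (β-1)) x :=
      Real.hasDerivAt_rpow_const (Or.inl hx0.ne')
    exact ((h1.const_add 1).inv hd.ne').hasDerivWithinAt
  have hinj : InjOn (fun s : ℝ => (1 + s ^ β)⁻¹) (Ioo 0 1) := by
    have anti : StrictAntiOn (fun s : ℝ => (1 + s ^ β)⁻¹) (Ioo 0 1) := by
      intro x hx y hy hxy
      have hxb : x ^ β < y ^ β := Real.rpow_lt_rpow hx.1.le hxy hβ0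
      have h1 : (0:ℝ) < 1 + x ^ β := by
        have := Real.rpow_pos_of_pos hx.1 β; linarith
      simp only
      exact inv_strictAnti₀ h1 (by linarith)
    exact anti.injOn
  have himg : (fun s : ℝ => (1 + s ^ β)⁻¹) '' Ioo 0 1 = Ioo (1/2) 1 := by
    ext u
    simp only [mem_image, mem_Ioo]
    constructor
    · rintro ⟨s, ⟨hs0, hs1⟩, rfl⟩
      have hb : (0:ℝ) < s ^ β := Real.rpow_pos_of_pos hs0 β
      have hb1 : s ^ β < 1 := Real.rpow_lt_one hs0.le hs1 hβ0
      constructor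
      · rw [show (1:ℝ)/2 = 2⁻¹ by norm_num]
        exact inv_strictAnti₀ (by linarith) (by linarith)
      · exact inv_lt_one_of_one_lt₀ (by linarith)
    · rintro ⟨hu0, hu1⟩
      have hu0' : (0:ℝ) < u := by linarith
      have h1u : (0:ℝ) < 1 - u := by linarith
      have hr0 : 0 < (1-u) / u := div_pos h1u hu0'
      have hr1 : (1-u) / u < 1 := by rw [div_lt_one hu0']; linarith
      refine ⟨((1-u)/u) ^ (1/β), ⟨Real.rpow_pos_of_pos hr0 _,
        Real.rpow_lt_one hr0.le hr1 (by positivity)⟩, ?_⟩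
      have hsβ : (((1-u)/u) ^ (1/β)) ^ β = (1-u) / u := by
        rw [← Real.rpow_mul hr0.le, one_div_mul_cancel hβ0.ne', Real.rpow_one]
      simp only [hsβ]
      rw [show 1 + (1-u)/u = 1/u by field_simp; ring, one_div, inv_inv]
  have key := integral_image_eq_integral_abs_deriv_smul measurableSet_Ioo hderiv hinj
    (fun u : ℝ => u ^ (-(1/β)) * (1-u) ^ (1/β))
  rw [himg] at key
  rw [key]
  apply setIntegral_congr_fun measurableSet_Ioo
  intro s hs
  have hs0 := hs.1
  have hsb : (0:ℝ) < s ^ β := Real.rpow_pos_of_pos hs0 β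
  have hd : (0:ℝ) < 1 + s ^ β := by linarith
  have e1 : ((1 + s ^ β)⁻¹) ^ (-(1/β)) = (1 + s ^ β) ^ (1/β) := by
    rw [Real.inv_rpow hd.le, Real.rpow_neg hd.le, inv_inv]
  have e2 : (1:ℝ) - (1 + s ^ β)⁻¹ = s ^ β / (1 + s ^ β) := by field_simp; ring
  have e3 : (s ^ β / (1 + s ^ β)) ^ (1/β) = s * ((1 + s ^ β) ^ (1/β))⁻¹ := by
    rw [Real.div_rpow hsb.le hd.le, ← Real.rpow_mul hs0.le,
      show β * (1/β) = 1 by field_simp, Real.rpow_one, div_eq_mul_inv]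
  have e4 : s ^ (β-1) * s = s ^ β := by
    rw [← Real.rpow_add_one hs0.ne' (β-1)]; norm_num
  have hX : ((1 + s ^ β) ^ (1/β)) ≠ 0 := ne_of_gt (Real.rpow_pos_of_pos hd _)
  simp only [smul_eq_mul]
  rw [e1, e2, e3, neg_div, abs_neg, abs_of_pos (by positivity), ← e4]
  field_simp

lemma LL_E3 {β : ℝ} (hβ1 : 1 < β)
    (hD : IntegrableOn (fun s : ℝ => β * s ^ (β-2) / (1 + s ^ β) ^ 2 + β * s ^ β / (1 + s ^ β) ^ 2
      - (1 / (1 + s ^ β) + s ^ (β-2) / (1 + s ^ β))) (Ioc 0 1) volume) :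
    ∫ s in Ioc (0:ℝ) 1, (β * s ^ (β-2) / (1 + s ^ β) ^ 2 + β * s ^ β / (1 + s ^ β) ^ 2
      - (1 / (1 + s ^ β) + s ^ (β-2) / (1 + s ^ β))) = 0 := by
  have hβ0 : (0:ℝ) < β := by linarith
  set φ : ℝ → ℝ := fun s => (s ^ (β-1) - s) / (1 + s ^ β) with hφ
  have hderiv : ∀ x ∈ Ioo (0:ℝ) 1, HasDerivAt φ
      (β * x ^ (β-2) / (1 + x ^ β) ^ 2 + β * x ^ β / (1 + x ^ β) ^ 2
        - (1 / (1 + x ^ β) + x ^ (β-2) / (1 + x ^ β))) x := by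
    intro x hx
    have hx0 := hx.1
    have hd : (0:ℝ) < 1 + x ^ β := by
      have := Real.rpow_pos_of_pos hx0 β; linarith
    have h1 : HasDerivAt (fun s : ℝ => s ^ (β-1)) ((β-1) * x ^ (β-1-1)) x :=
      Real.hasDerivAt_rpow_const (Or.inl hx0.ne')
    have h2 : HasDerivAt (fun s : ℝ => s ^ β) (β * x ^ (β-1)) x :=
      Real.hasDerivAt_rpow_const (Or.inl hx0.ne')
    have h3 := (h1.sub (hasDerivAt_id x)).div (h2.const_add 1) hd.ne'
    have e1 : x ^ (β-1) = x ^ (β-2) * x := by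
      rw [← Real.rpow_add_one hx0.ne' (β-2)]; congr 1; ring
    have e2 : x ^ β = x ^ (β-2) * x * x := by
      rw [← e1, ← Real.rpow_add_one hx0.ne' (β-1)]; congr 1; ring
    have e0 : x ^ (β-1-1) = x ^ (β-2) := by congr 1; ring
    have heq : (((β-1) * x ^ (β-1-1) - 1) * (1 + x ^ β) - (x ^ (β-1) - x) * (β * x ^ (β-1)))
        / (1 + x ^ β) ^ 2
        = β * x ^ (β-2) / (1 + x ^ β) ^ 2 + β * x ^ β / (1 + x ^ β) ^ 2
          - (1 / (1 + x ^ β) + x ^ (β-2) / (1 + x ^ β)) := by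
      rw [e0, e1, e2]
      have hdd : (0:ℝ) < 1 + x ^ (β-2) * x * x := by rw [← e2]; exact hd
      field_simp
      ring
    simp only [Pi.sub_apply, id_eq] at h3
    rw [heq] at h3
    exact h3
  have h0 : Filter.Tendsto φ (nhdsWithin 0 (Ioi 0)) (nhds 0) := by
    have hca : ContinuousAt φ 0 := by
      apply ContinuousAt.div
      · exact (Real.continuousAt_rpow_const 0 _ (Or.inr (by linarith))).sub continuousAt_id
      · exact continuousAt_const.add (Real.continuousAt_rpow_const 0 _ (Or.inr hβ0.le))
      · simp [Real.zero_rpow hβ0.ne']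
    have h00 : φ 0 = 0 := by
      simp [hφ, Real.zero_rpow hβ0.ne', Real.zero_rpow (show β - 1 ≠ 0 by intro h; linarith [sub_eq_zero.mp h])]
    have h2 : Filter.Tendsto φ (nhdsWithin 0 (Ioi 0)) (nhds (φ 0)) :=
      hca.tendsto.mono_left nhdsWithin_le_nhds
    rwa [h00] at h2
  have h1 : Filter.Tendsto φ (nhdsWithin 1 (Iio 1)) (nhds 0) := by
    have hca : ContinuousAt φ 1 := by
      apply ContinuousAt.div
      · exact (Real.continuousAt_rpow_const 1 _ (Or.inl one_ne_zero)).sub continuousAt_id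
      · exact continuousAt_const.add (Real.continuousAt_rpow_const 1 _ (Or.inl one_ne_zero))
      · simp
    have h11 : φ 1 = 0 := by simp [hφ]
    have h2 : Filter.Tendsto φ (nhdsWithin 1 (Iio 1)) (nhds (φ 1)) :=
      hca.tendsto.mono_left nhdsWithin_le_nhds
    rwa [h11] at h2
  have hintD := (intervalIntegrable_iff_integrableOn_Ioc_of_le zero_le_one).2 hD
  have total := intervalIntegral.integral_eq_sub_of_hasDerivAt_of_tendsto zero_lt_one
    hderiv hintD h0 h1
  rw [intervalIntegral.integral_of_le zero_le_one] at total
  simpa using total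

lemma LL_key {β : ℝ} (hβ1 : 1 < β) (hβ2 : β ≤ 2) :
    2 * ∫ s in Ioo (0:ℝ) 1, 1 / (1 + s ^ β) ≤
      ∫ u in Ioo (0:ℝ) 1, u ^ (-(1/β)) * (1-u) ^ (1/β) := by
  have hβ0 : (0:ℝ) < β := by linarith
  obtain ⟨hIj, hIk, hIa, hIb, hIf⟩ := LL_integrables hβ1
  have hJK : ∫ s in Ioc (0:ℝ) 1, 1 / (1 + s ^ β) ≤
      ∫ s in Ioc (0:ℝ) 1, s ^ (β-2) / (1 + s ^ β) := by
    apply setIntegral_mono_on hIj hIk measurableSet_Ioc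
    intro x hx
    have h1 : (0:ℝ) < 1 + x ^ β := by
      have := Real.rpow_pos_of_pos hx.1 β; linarith
    have h2 : (1:ℝ) ≤ x ^ (β-2) := by
      simpa using Real.rpow_le_rpow_of_exponent_ge hx.1 hx.2 (by linarith : β - 2 ≤ 0)
    gcongr
  have hf1 : IntegrableOn (fun u : ℝ => u ^ (-(1/β)) * (1-u) ^ (1/β)) (Ioo 0 (1/2)) volume :=
    hIf.mono_set (fun x hx => ⟨hx.1, by linarith [hx.2]⟩)
  have hf2 : IntegrableOn (fun u : ℝ => u ^ (-(1/β)) * (1-u) ^ (1/β)) (Ico (1/2) 1) volume :=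
    hIf.mono_set (fun x hx => ⟨by linarith [hx.1], hx.2.le⟩)
  have hdisj : Disjoint (Ioo (0:ℝ) (1/2)) (Ico (1/2) 1) := by
    apply Set.disjoint_left.mpr
    rintro x ⟨_, h2⟩ ⟨h3, _⟩
    linarith
  have hsplit : ∫ u in Ioo (0:ℝ) 1, u ^ (-(1/β)) * (1-u) ^ (1/β) =
      (∫ u in Ioo (0:ℝ) (1/2), u ^ (-(1/β)) * (1-u) ^ (1/β)) +
      ∫ u in Ioo (1/2:ℝ) 1, u ^ (-(1/β)) * (1-u) ^ (1/β) := by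
    rw [← Ioo_union_Ico_eq_Ioo (by norm_num : (0:ℝ) < 1/2) (by norm_num : (1/2:ℝ) ≤ 1),
      setIntegral_union hdisj measurableSet_Ico hf1 hf2, integral_Ico_eq_integral_Ioo]
  have hE3 : ∫ s in Ioc (0:ℝ) 1, (β * s ^ (β-2) / (1 + s ^ β) ^ 2 + β * s ^ β / (1 + s ^ β) ^ 2
      - (1 / (1 + s ^ β) + s ^ (β-2) / (1 + s ^ β))) = 0 :=
    LL_E3 hβ1 ((hIa.add hIb).sub (hIj.add hIk))
  have hIab : IntegrableOn (fun s : ℝ => β * s ^ (β-2) / (1 + s ^ β) ^ 2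
      + β * s ^ β / (1 + s ^ β) ^ 2) (Ioc 0 1) volume := hIa.add hIb
  have hIjk : IntegrableOn (fun s : ℝ => 1 / (1 + s ^ β)
      + s ^ (β-2) / (1 + s ^ β)) (Ioc 0 1) volume := hIj.add hIk
  rw [integral_sub hIab hIjk, integral_add hIa hIb, integral_add hIj hIk] at hE3
  have hE1 : ∫ u in Ioo (0:ℝ) (1/2), u ^ (-(1/β)) * (1-u) ^ (1/β) =
      ∫ s in Ioo (0:ℝ) 1, β * s ^ (β-2) / (1 + s ^ β) ^ 2 := LL_E1 hβ1
  have hE2 : ∫ u in Ioo (1/2:ℝ) 1, u ^ (-(1/β)) * (1-u) ^ (1/β) =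
      ∫ s in Ioo (0:ℝ) 1, β * s ^ β / (1 + s ^ β) ^ 2 := LL_E2 hβ1
  rw [hsplit, hE1, hE2]
  have c1 : ∫ s in Ioc (0:ℝ) 1, β * s ^ (β-2) / (1 + s ^ β) ^ 2 =
      ∫ s in Ioo (0:ℝ) 1, β * s ^ (β-2) / (1 + s ^ β) ^ 2 := integral_Ioc_eq_integral_Ioo
  have c2 : ∫ s in Ioc (0:ℝ) 1, β * s ^ β / (1 + s ^ β) ^ 2 =
      ∫ s in Ioo (0:ℝ) 1, β * s ^ β / (1 + s ^ β) ^ 2 := integral_Ioc_eq_integral_Ioo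
  have c3 : ∫ s in Ioc (0:ℝ) 1, 1 / (1 + s ^ β) =
      ∫ s in Ioo (0:ℝ) 1, 1 / (1 + s ^ β) := integral_Ioc_eq_integral_Ioo
  rw [c1, c2, c3] at hE3
  rw [c3] at hJK
  linarith


/-- If `C ~ LogLogistic(α, β)` with `β ∈ (1, 2]` (CDF
`F_C(t) = 1/(1+(t/α)^(−β))`), then `κ(α) ≤ E[C]`, where `α` is the median of `C`,
`κ(T) = E[min{C,T}]/F_C(T)`, and `E[C] = α · B(1; 1 − 1/β, 1 + 1/β)`. -/
theorem loglogistic_kappa_median_le_mean {Ω : Type*} [MeasurableSpace Ω]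
    (μ : Measure Ω) [IsProbabilityMeasure μ] (C : Ω → ℝ) (hmeas : Measurable C)
    (hpos : ∀ ω, 0 < C ω)
    (α β : ℝ) (hα : 0 < α) (hβ1 : 1 < β) (hβ2 : β ≤ 2)
    (hcdf : ∀ t : ℝ, 0 < t → (μ {ω | C ω ≤ t}).toReal = 1 / (1 + (t / α) ^ (-β)))
    (hint : Integrable C μ) :
    (∫ ω, min (C ω) α ∂μ) / (μ {ω | C ω ≤ α}).toReal ≤
      α * incBeta 1 (1 - 1 / β) (1 + 1 / β) := by
  have hβ0 : (0:ℝ) < β := by linarith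
  have hF : (μ {ω | C ω ≤ α}).toReal = 1/2 := by
    rw [hcdf α hα, div_self hα.ne', Real.one_rpow]
    norm_num
  have hminmeas : Measurable fun ω => min (C ω) α := hmeas.min measurable_const
  have hminint : Integrable (fun ω => min (C ω) α) μ := by
    apply hint.mono hminmeas.aestronglyMeasurable
    refine ae_of_all _ fun ω => ?_
    rw [Real.norm_eq_abs, Real.norm_eq_abs, abs_of_pos (lt_min (hpos ω) hα),
      abs_of_pos (hpos ω)]
    exact min_le_left _ _
  have hnn : 0 ≤ᵐ[μ] fun ω => min (C ω) α := ae_of_all _ fun ω => (lt_min (hpos ω) hα).le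
  have hlc := hminint.integral_eq_integral_meas_lt hnn
  have hptw : ∀ t ∈ Ioi (0:ℝ), (μ {a | t < min (C a) α}).toReal
      = Set.indicator (Ioo 0 α) (fun t => 1 / (1 + (t/α) ^ β)) t := by
    intro t ht
    by_cases htα : t < α
    · have hmem : t ∈ Ioo 0 α := ⟨ht, htα⟩
      rw [Set.indicator_of_mem hmem]
      have hset : {a | t < min (C a) α} = {a | C a ≤ t}ᶜ := by
        ext a
        simp only [mem_setOf_eq, mem_compl_iff, not_le, lt_min_iff]
        exact ⟨fun h => h.1, fun h => ⟨h, htα⟩⟩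
      have hms : MeasurableSet {a | C a ≤ t} := hmeas measurableSet_Iic
      rw [hset, prob_compl_eq_one_sub hms,
        ENNReal.toReal_sub_of_le prob_le_one ENNReal.one_ne_top, ENNReal.toReal_one,
        hcdf t ht, Real.rpow_neg (div_pos ht hα).le]
      have hx : (0:ℝ) < (t/α) ^ β := Real.rpow_pos_of_pos (div_pos ht hα) β
      have h1 : (0:ℝ) < 1 + (t/α) ^ β := by linarith
      have h2 : (0:ℝ) < 1 + ((t/α) ^ β)⁻¹ := by positivity
      field_simp
      ring
    · rw [Set.indicator_of_notMem (fun hmem => htα hmem.2)]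
      have hset : {a | t < min (C a) α} = ∅ := by
        ext a
        simp only [mem_setOf_eq, mem_empty_iff_false, iff_false, not_lt]
        exact le_trans (min_le_right _ _) (not_lt.mp htα)
      rw [hset]
      simp
  rw [hlc]
  simp only [measureReal_def]
  rw [setIntegral_congr_fun measurableSet_Ioi hptw,
    setIntegral_indicator measurableSet_Ioo, inter_eq_right.mpr Ioo_subset_Ioi_self]
  have hscale : ∫ t in Ioo (0:ℝ) α, 1 / (1 + (t/α) ^ β)
      = α * ∫ s in Ioo (0:ℝ) 1, 1 / (1 + s ^ β) := by
    have himg : (fun s : ℝ => α * s) '' Ioo 0 1 = Ioo 0 α := by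
      ext t
      simp only [mem_image, mem_Ioo]
      constructor
      · rintro ⟨s, ⟨h1, h2⟩, rfl⟩
        constructor
        · positivity
        · nlinarith
      · rintro ⟨h1, h2⟩
        exact ⟨t/α, ⟨div_pos h1 hα, (div_lt_one hα).2 h2⟩, by field_simp⟩
    have hd : ∀ x ∈ Ioo (0:ℝ) 1, HasDerivWithinAt (fun s : ℝ => α * s) α (Ioo 0 1) x := by
      intro x hx
      simpa using ((hasDerivAt_id x).const_mul α).hasDerivWithinAt
    have hinj : InjOn (fun s : ℝ => α * s) (Ioo 0 1) :=
      (mul_right_injective₀ hα.ne').injOn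
    have hch := integral_image_eq_integral_abs_deriv_smul measurableSet_Ioo hd hinj
      (fun t : ℝ => 1 / (1 + (t/α) ^ β))
    rw [himg] at hch
    rw [hch, ← integral_const_mul]
    apply setIntegral_congr_fun measurableSet_Ioo
    intro s hs
    simp only [smul_eq_mul]
    rw [abs_of_pos hα, mul_div_cancel_left₀ _ hα.ne']
  have hIB : incBeta 1 (1 - 1/β) (1 + 1/β) = ∫ u in Ioo (0:ℝ) 1, u ^ (-(1/β)) * (1-u) ^ (1/β) := by
    unfold incBeta
    rw [show (1 - 1/β) - 1 = -(1/β) by ring, show (1 + 1/β) - 1 = 1/β by ring,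
      integral_Ioc_eq_integral_Ioo]
  rw [hF, hscale, hIB]
  have hkey := LL_key hβ1 hβ2
  rw [div_eq_mul_inv, show ((1:ℝ)/2)⁻¹ = 2 by norm_num]
  calc (α * ∫ s in Ioo (0:ℝ) 1, 1 / (1 + s ^ β)) * 2
      = α * (2 * ∫ s in Ioo (0:ℝ) 1, 1 / (1 + s ^ β)) := by ring
    _ ≤ α * ∫ u in Ioo (0:ℝ) 1, u ^ (-(1/β)) * (1-u) ^ (1/β) :=
        mul_le_mul_of_nonneg_left hkey hα.le
end
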